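/- arXiv:0805.2995 — 4 statements merged into one kernel-verified Lean document; each statement's English description precedes it below -/
import Mathlib

section
/- (Inner-bound auxiliary inequality I.) Let (A, C, E, U, V) be finite-valued random variables whose joint pmf factorizes as p_{ACE}(a,c,e)·p_{U|A}(u|a)·p_{V|C}(v|c), and suppose H(C|A,V) = 0. Then I(A;V|U) − I(A;E|U) ≤ I(A;C). -/
open scoped BigOperators

noncomputable section

namespace SSW

/-- Probability that the random variable `X` takes the value `x`, under the pmf `p`. -/
def pr {Ω α : Type*} [Fintype Ω] (p : Ω → ℝ) (X : Ω → α) (x : α) : ℝ :=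
  ∑ ω, @ite _ (X ω = x) (Classical.propDecidable _) (p ω) 0

/-- Probability of the event `s` under the pmf `p`. -/
def prE {Ω : Type*} [Fintype Ω] (p : Ω → ℝ) (s : Ω → Prop) : ℝ :=
  ∑ ω, @ite _ (s ω) (Classical.propDecidable _) (p ω) 0

/-- Shannon entropy (base 2) of the random variable `X` under the pmf `p`. -/
def H {Ω α : Type*} [Fintype Ω] [Fintype α] (p : Ω → ℝ) (X : Ω → α) : ℝ :=
  ∑ x, -(pr p X x * Real.logb 2 (pr p X x))

/-- Conditional Shannon entropy `H(X|Y) = H(X,Y) - H(Y)` (base 2). -/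
def Hc {Ω α β : Type*} [Fintype Ω] [Fintype α] [Fintype β]
    (p : Ω → ℝ) (X : Ω → α) (Y : Ω → β) : ℝ :=
  H p (fun ω => (X ω, Y ω)) - H p Y

/-- Mutual information `I(X;Y) = H(X) + H(Y) - H(X,Y)` (base 2). -/
def MI {Ω α β : Type*} [Fintype Ω] [Fintype α] [Fintype β]
    (p : Ω → ℝ) (X : Ω → α) (Y : Ω → β) : ℝ :=
  H p X + H p Y - H p (fun ω => (X ω, Y ω))

/-- Conditional mutual information `I(X;Y|Z) = H(X|Z) - H(X|Y,Z)` (base 2). -/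
def cMI {Ω α β γ : Type*} [Fintype Ω] [Fintype α] [Fintype β] [Fintype γ]
    (p : Ω → ℝ) (X : Ω → α) (Y : Ω → β) (Z : Ω → γ) : ℝ :=
  Hc p X Z - Hc p X (fun ω => (Y ω, Z ω))

/-- `p` is a probability mass function on the finite type `Ω`. -/
def IsPMF {Ω : Type*} [Fintype Ω] (p : Ω → ℝ) : Prop :=
  (∀ ω, 0 ≤ p ω) ∧ ∑ ω, p ω = 1

/-- The Markov chain `X − Y − Z`: `X` and `Z` are conditionally independent given `Y`. -/
def Markov {Ω α β γ : Type*} [Fintype Ω] (p : Ω → ℝ)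
    (X : Ω → α) (Y : Ω → β) (Z : Ω → γ) : Prop :=
  ∀ x y z,
    pr p (fun ω => (X ω, Y ω, Z ω)) (x, y, z) * pr p Y y =
      pr p (fun ω => (X ω, Y ω)) (x, y) * pr p (fun ω => (Y ω, Z ω)) (y, z)

/-- `k` is a conditional probability kernel from `α` to `β`. -/
def IsKernel {α β : Type*} [Fintype β] (k : α → β → ℝ) : Prop :=
  ∀ a, (∀ b, 0 ≤ k a b) ∧ ∑ b, k a b = 1

/-- The i.i.d. block pmf on `Fin N → S` induced by the single-letter pmf `p` on `S`. -/
def blk {S : Type*} [Fintype S] (N : ℕ) (p : S → ℝ) : (Fin N → S) → ℝ :=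
  fun ω => ∏ i, p (ω i)

end SSW

open SSW

namespace InnerAux

open SSW

variable {Ω α β γ : Type*} [Fintype Ω] [Fintype α] [Fintype β] [Fintype γ]

set_option linter.unusedSectionVars false

lemma pr_nonneg (p : Ω → ℝ) (hp : ∀ ω, 0 ≤ p ω) (X : Ω → α) (x : α) : 0 ≤ pr p X x := by
  refine Finset.sum_nonneg fun ω _ => ?_
  split <;> simp [hp ω]

lemma pr_congr (p : Ω → ℝ) {X : Ω → α} {Y : Ω → β} {x : α} {y : β}
    (h : ∀ ω, X ω = x ↔ Y ω = y) : pr p X x = pr p Y y := by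
  classical
  unfold pr
  exact Finset.sum_congr rfl fun ω _ =>
    @if_congr _ _ _ (Classical.propDecidable _) (Classical.propDecidable _) _ _ _ _ (h ω) rfl rfl

lemma sum_pr (p : Ω → ℝ) (X : Ω → α) : ∑ x, pr p X x = ∑ ω, p ω := by
  classical
  unfold pr
  rw [Finset.sum_comm]
  refine Finset.sum_congr rfl fun ω _ => ?_
  simp

/-- change of variables -/
lemma sum_pr_mul (p : Ω → ℝ) (X : Ω → α) (f : α → ℝ) :
    ∑ x, pr p X x * f x = ∑ ω, p ω * f (X ω) := by
  classical
  unfold pr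
  simp only [Finset.sum_mul]
  rw [Finset.sum_comm]
  refine Finset.sum_congr rfl fun ω _ => ?_
  rw [Finset.sum_eq_single (X ω)]
  · simp
  · intro b _ hb
    rw [if_neg (fun h => hb h.symm), zero_mul]
  · simp

lemma H_grouped (p : Ω → ℝ) (X : Ω → α) :
    H p X = ∑ ω, -(p ω * Real.logb 2 (pr p X (X ω))) := by
  have : H p X = -∑ x, pr p X x * Real.logb 2 (pr p X x) := by
    unfold H; rw [← Finset.sum_neg_distrib]
  rw [this, sum_pr_mul p X (fun x => Real.logb 2 (pr p X x)), ← Finset.sum_neg_distrib]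

lemma H_map (p : Ω → ℝ) (X : Ω → α) (f : α → β) (hf : Function.Injective f) :
    H p (fun ω => f (X ω)) = H p X := by
  classical
  have hzero : ∀ y ∉ Finset.image f Finset.univ, pr p (fun ω => f (X ω)) y = 0 := by
    intro y hy
    refine Finset.sum_eq_zero fun ω _ => ?_
    rw [if_neg]
    intro h
    exact hy (Finset.mem_image.2 ⟨X ω, Finset.mem_univ _, h⟩)
  have h2 : H p (fun ω => f (X ω)) =
      ∑ y ∈ Finset.image f Finset.univ,
        -(pr p (fun ω => f (X ω)) y * Real.logb 2 (pr p (fun ω => f (X ω)) y)) := by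
    unfold H
    refine (Finset.sum_subset (Finset.subset_univ _) ?_).symm
    intro y _ hy
    rw [hzero y hy]; simp
  rw [h2, Finset.sum_image (fun a _ b _ h => hf h)]
  unfold H
  refine Finset.sum_congr rfl fun x _ => ?_
  have : pr p (fun ω => f (X ω)) (f x) = pr p X x :=
    pr_congr p (fun ω => ⟨fun h => hf h, fun h => by rw [h]⟩)
  rw [this]

lemma pr_fiber (p : Ω → ℝ) (X : Ω → α) (Y : Ω → β) (x : α) :
    ∑ y, pr p (fun ω => (X ω, Y ω)) (x, y) = pr p X x := by
  classical
  unfold pr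
  rw [Finset.sum_comm]
  refine Finset.sum_congr rfl fun ω _ => ?_
  by_cases hx : X ω = x
  · simp [Prod.ext_iff, hx]
  · simp [Prod.ext_iff, hx]

lemma pr_fiber' (p : Ω → ℝ) (X : Ω → α) (Y : Ω → β) (y : β) :
    ∑ x, pr p (fun ω => (X ω, Y ω)) (x, y) = pr p Y y := by
  classical
  unfold pr
  rw [Finset.sum_comm]
  refine Finset.sum_congr rfl fun ω _ => ?_
  by_cases hy : Y ω = y
  · simp [Prod.ext_iff, hy]
  · simp [Prod.ext_iff, hy]

section triple
variable (p : Ω → ℝ) (X : Ω → α) (Y : Ω → β) (Z : Ω → γ)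

/-- grouped representation of cMI -/
lemma cMI_grouped :
    cMI p X Y Z = ∑ w : α × β × γ,
      pr p (fun ω => (X ω, Y ω, Z ω)) w *
        (Real.logb 2 (pr p (fun ω => (X ω, Y ω, Z ω)) w)
          + Real.logb 2 (pr p Z w.2.2)
          - Real.logb 2 (pr p (fun ω => (X ω, Z ω)) (w.1, w.2.2))
          - Real.logb 2 (pr p (fun ω => (Y ω, Z ω)) w.2)) := by
  rw [sum_pr_mul p (fun ω => (X ω, Y ω, Z ω))
      (fun w => Real.logb 2 (pr p (fun ω => (X ω, Y ω, Z ω)) w)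
          + Real.logb 2 (pr p Z w.2.2)
          - Real.logb 2 (pr p (fun ω => (X ω, Z ω)) (w.1, w.2.2))
          - Real.logb 2 (pr p (fun ω => (Y ω, Z ω)) w.2))]
  unfold cMI Hc
  rw [H_grouped p (fun ω => (X ω, Z ω)), H_grouped p Z,
    H_grouped p (fun ω => (X ω, (Y ω, Z ω))), H_grouped p (fun ω => (Y ω, Z ω))]
  rw [← Finset.sum_sub_distrib, ← Finset.sum_sub_distrib, ← Finset.sum_sub_distrib]
  refine Finset.sum_congr rfl fun ω _ => ?_
  ring

lemma marg_XZ (x : α) (z : γ) :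
    pr p (fun ω => (X ω, Z ω)) (x, z) = ∑ y, pr p (fun ω => (X ω, Y ω, Z ω)) (x, y, z) := by
  rw [← pr_fiber p (fun ω => (X ω, Z ω)) Y (x, z)]
  refine Finset.sum_congr rfl fun y _ => ?_
  refine pr_congr p fun ω => ?_
  constructor <;> (intro h; simp only [Prod.ext_iff] at h ⊢; tauto)

lemma marg_YZ (y : β) (z : γ) :
    pr p (fun ω => (Y ω, Z ω)) (y, z) = ∑ x, pr p (fun ω => (X ω, Y ω, Z ω)) (x, y, z) :=
  (pr_fiber' p X (fun ω => (Y ω, Z ω)) (y, z)).symm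

lemma marg_Z (z : γ) :
    pr p Z z = ∑ x, ∑ y, pr p (fun ω => (X ω, Y ω, Z ω)) (x, y, z) := by
  rw [← pr_fiber' p Y Z z]
  have hcomm : ∑ x, ∑ y, pr p (fun ω => (X ω, Y ω, Z ω)) (x, y, z)
      = ∑ y, ∑ x, pr p (fun ω => (X ω, Y ω, Z ω)) (x, y, z) := Finset.sum_comm
  rw [hcomm]
  exact Finset.sum_congr rfl fun y _ => marg_YZ p X Y Z y z

lemma J_le_XZ (hp : ∀ ω, 0 ≤ p ω) (w : α × β × γ) :
    pr p (fun ω => (X ω, Y ω, Z ω)) w ≤ pr p (fun ω => (X ω, Z ω)) (w.1, w.2.2) := by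
  obtain ⟨x, y, z⟩ := w
  rw [marg_XZ p X Y Z x z]
  exact Finset.single_le_sum (f := fun y => pr p (fun ω => (X ω, Y ω, Z ω)) (x, y, z))
    (fun y _ => pr_nonneg p hp _ _) (Finset.mem_univ y)

lemma J_le_YZ (hp : ∀ ω, 0 ≤ p ω) (w : α × β × γ) :
    pr p (fun ω => (X ω, Y ω, Z ω)) w ≤ pr p (fun ω => (Y ω, Z ω)) w.2 := by
  obtain ⟨x, y, z⟩ := w
  rw [marg_YZ p X Y Z y z]
  exact Finset.single_le_sum (f := fun x => pr p (fun ω => (X ω, Y ω, Z ω)) (x, y, z))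
    (fun x _ => pr_nonneg p hp _ _) (Finset.mem_univ x)

lemma J_le_Z (hp : ∀ ω, 0 ≤ p ω) (w : α × β × γ) :
    pr p (fun ω => (X ω, Y ω, Z ω)) w ≤ pr p Z w.2.2 := by
  obtain ⟨x, y, z⟩ := w
  rw [marg_Z p X Y Z z]
  calc pr p (fun ω => (X ω, Y ω, Z ω)) (x, y, z)
      ≤ ∑ y', pr p (fun ω => (X ω, Y ω, Z ω)) (x, y', z) :=
        Finset.single_le_sum (f := fun y' => pr p (fun ω => (X ω, Y ω, Z ω)) (x, y', z))
          (fun y' _ => pr_nonneg p hp _ _) (Finset.mem_univ y)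
    _ ≤ _ := Finset.single_le_sum
        (f := fun x' => ∑ y', pr p (fun ω => (X ω, Y ω, Z ω)) (x', y', z))
        (fun x' _ => Finset.sum_nonneg fun y' _ => pr_nonneg p hp _ _) (Finset.mem_univ x)

end triple

lemma log_term_zero (j a b c : ℝ) (hj : 0 ≤ j) (ha : j ≤ a) (hb : j ≤ b) (hc : j ≤ c)
    (h : j * c = a * b) :
    j * (Real.logb 2 j + Real.logb 2 c - Real.logb 2 a - Real.logb 2 b) = 0 := by
  rcases eq_or_lt_of_le hj with hj0 | hj0
  · rw [← hj0]; ring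
  · have ha0 : 0 < a := lt_of_lt_of_le hj0 ha
    have hb0 : 0 < b := lt_of_lt_of_le hj0 hb
    have hc0 : 0 < c := lt_of_lt_of_le hj0 hc
    have : Real.logb 2 j + Real.logb 2 c = Real.logb 2 a + Real.logb 2 b := by
      rw [← Real.logb_mul (ne_of_gt hj0) (ne_of_gt hc0),
        ← Real.logb_mul (ne_of_gt ha0) (ne_of_gt hb0), h]
    rw [this]; ring

lemma log_term_bound (j a b c : ℝ) (hj : 0 ≤ j) (ha : j ≤ a) (hb : j ≤ b) (hc : j ≤ c)
    (ha0 : 0 ≤ a) (hb0 : 0 ≤ b) (hc0 : 0 ≤ c) :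
    (j - a * b / c) / Real.log 2 ≤
      j * (Real.logb 2 j + Real.logb 2 c - Real.logb 2 a - Real.logb 2 b) := by
  have hlog2 : 0 < Real.log 2 := Real.log_pos (by norm_num)
  rcases eq_or_lt_of_le hj with hj0 | hj0
  · rw [← hj0]
    have : (0:ℝ) - a * b / c ≤ 0 := by
      have : 0 ≤ a * b / c := div_nonneg (mul_nonneg ha0 hb0) hc0
      linarith
    calc (0 - a * b / c) / Real.log 2 ≤ 0 := div_nonpos_of_nonpos_of_nonneg this hlog2.le
    _ = 0 * _ := by ring
  · have ha1 : 0 < a := lt_of_lt_of_le hj0 ha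
    have hb1 : 0 < b := lt_of_lt_of_le hj0 hb
    have hc1 : 0 < c := lt_of_lt_of_le hj0 hc
    have key : Real.logb 2 j + Real.logb 2 c - Real.logb 2 a - Real.logb 2 b =
        Real.log (j * c / (a * b)) / Real.log 2 := by
      rw [Real.log_div (by positivity) (by positivity), Real.log_mul (ne_of_gt hj0) (ne_of_gt hc1),
        Real.log_mul (ne_of_gt ha1) (ne_of_gt hb1)]
      simp [Real.logb]
      ring
    rw [key]
    have hx : 0 < a * b / (j * c) := by positivity
    have hlb : Real.log (a * b / (j * c)) ≤ a * b / (j * c) - 1 :=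
      Real.log_le_sub_one_of_pos hx
    have hflip : Real.log (j * c / (a * b)) = - Real.log (a * b / (j * c)) := by
      rw [← Real.log_inv]
      congr 1
      field_simp
    have h1 : 1 - a * b / (j * c) ≤ Real.log (j * c / (a * b)) := by
      rw [hflip]; linarith
    have h2 : j * (1 - a * b / (j * c)) = j - a * b / c := by
      field_simp
    calc (j - a * b / c) / Real.log 2 = j * (1 - a * b / (j * c)) / Real.log 2 := by rw [h2]
      _ ≤ j * Real.log (j * c / (a * b)) / Real.log 2 := by
          gcongr
      _ = j * (Real.log (j * c / (a * b)) / Real.log 2) := by ring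

section main
variable (p : Ω → ℝ) (X : Ω → α) (Y : Ω → β) (Z : Ω → γ)

theorem cMI_eq_zero (hp : ∀ ω, 0 ≤ p ω)
    (hm : ∀ w : α × β × γ, pr p (fun ω => (X ω, Y ω, Z ω)) w * pr p Z w.2.2 =
      pr p (fun ω => (X ω, Z ω)) (w.1, w.2.2) * pr p (fun ω => (Y ω, Z ω)) w.2) :
    cMI p X Y Z = 0 := by
  rw [cMI_grouped]
  refine Finset.sum_eq_zero fun w _ => ?_
  exact log_term_zero _ _ _ _ (pr_nonneg p hp _ _) (J_le_XZ p X Y Z hp w)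
    (J_le_YZ p X Y Z hp w) (J_le_Z p X Y Z hp w) (hm w)

theorem cMI_nonneg (hp : IsPMF p) : 0 ≤ cMI p X Y Z := by
  obtain ⟨hp0, hp1⟩ := hp
  rw [cMI_grouped]
  have hbound : ∀ w : α × β × γ,
      (pr p (fun ω => (X ω, Y ω, Z ω)) w -
        pr p (fun ω => (X ω, Z ω)) (w.1, w.2.2) * pr p (fun ω => (Y ω, Z ω)) w.2 /
          pr p Z w.2.2) / Real.log 2 ≤
      pr p (fun ω => (X ω, Y ω, Z ω)) w *
        (Real.logb 2 (pr p (fun ω => (X ω, Y ω, Z ω)) w)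
          + Real.logb 2 (pr p Z w.2.2)
          - Real.logb 2 (pr p (fun ω => (X ω, Z ω)) (w.1, w.2.2))
          - Real.logb 2 (pr p (fun ω => (Y ω, Z ω)) w.2)) := fun w =>
    log_term_bound _ _ _ _ (pr_nonneg p hp0 _ _) (J_le_XZ p X Y Z hp0 w)
      (J_le_YZ p X Y Z hp0 w) (J_le_Z p X Y Z hp0 w)
      (pr_nonneg p hp0 _ _) (pr_nonneg p hp0 _ _) (pr_nonneg p hp0 _ _)
  have hsum : ∑ w : α × β × γ,
      (pr p (fun ω => (X ω, Y ω, Z ω)) w -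
        pr p (fun ω => (X ω, Z ω)) (w.1, w.2.2) * pr p (fun ω => (Y ω, Z ω)) w.2 /
          pr p Z w.2.2) / Real.log 2 ≤ ∑ w, _ :=
    Finset.sum_le_sum fun w _ => hbound w
  refine le_trans ?_ hsum
  rw [← Finset.sum_div]
  apply div_nonneg ?_ (Real.log_nonneg (by norm_num))
  rw [Finset.sum_sub_distrib]
  have hJ1 : ∑ w : α × β × γ, pr p (fun ω => (X ω, Y ω, Z ω)) w = 1 := by
    rw [sum_pr]; exact hp1
  rw [hJ1]
  have hfrac : ∑ w : α × β × γ,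
      pr p (fun ω => (X ω, Z ω)) (w.1, w.2.2) * pr p (fun ω => (Y ω, Z ω)) w.2 /
        pr p Z w.2.2 ≤ 1 := by
    have hsplit : ∑ w : α × β × γ,
        pr p (fun ω => (X ω, Z ω)) (w.1, w.2.2) * pr p (fun ω => (Y ω, Z ω)) w.2 /
          pr p Z w.2.2
        = ∑ z, (∑ x, pr p (fun ω => (X ω, Z ω)) (x, z)) *
            (∑ y, pr p (fun ω => (Y ω, Z ω)) (y, z)) / pr p Z z := by
      have e1 : ∀ z, (∑ x, pr p (fun ω => (X ω, Z ω)) (x, z)) *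
            (∑ y, pr p (fun ω => (Y ω, Z ω)) (y, z)) / pr p Z z
          = ∑ x, ∑ y, pr p (fun ω => (X ω, Z ω)) (x, z) *
              pr p (fun ω => (Y ω, Z ω)) (y, z) / pr p Z z := by
        intro z
        rw [Finset.sum_mul_sum, Finset.sum_div]
        exact Finset.sum_congr rfl fun x _ => by rw [Finset.sum_div]
      simp only [e1]
      rw [Fintype.sum_prod_type]
      simp only [Fintype.sum_prod_type]
      have swap1 : ∑ x, ∑ y, ∑ z, pr p (fun ω => (X ω, Z ω)) (x, z) *
              pr p (fun ω => (Y ω, Z ω)) (y, z) / pr p Z z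
          = ∑ x, ∑ z, ∑ y, pr p (fun ω => (X ω, Z ω)) (x, z) *
              pr p (fun ω => (Y ω, Z ω)) (y, z) / pr p Z z :=
        Finset.sum_congr rfl fun x _ => Finset.sum_comm
      rw [swap1]
      exact Finset.sum_comm
    rw [hsplit]
    calc ∑ z, (∑ x, pr p (fun ω => (X ω, Z ω)) (x, z)) *
            (∑ y, pr p (fun ω => (Y ω, Z ω)) (y, z)) / pr p Z z
        = ∑ z, pr p Z z * pr p Z z / pr p Z z := by
          refine Finset.sum_congr rfl fun z _ => ?_
          rw [pr_fiber' p X Z z, pr_fiber' p Y Z z]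
      _ ≤ ∑ z, pr p Z z := by
          refine Finset.sum_le_sum fun z _ => ?_
          by_cases h : pr p Z z = 0
          · simp [h]
          · rw [mul_div_assoc, div_self h, mul_one]
      _ = 1 := by rw [sum_pr]; exact hp1
  linarith

end main

lemma H_unit (p : Ω → ℝ) (hp1 : ∑ ω, p ω = 1) : H p (fun _ : Ω => ()) = 0 := by
  have hpr : pr p (fun _ : Ω => ()) () = 1 := by
    unfold pr; simpa using hp1
  unfold H
  simp [hpr]

lemma MI_eq_cMI_unit (p : Ω → ℝ) (hp1 : ∑ ω, p ω = 1) (X : Ω → α) (Y : Ω → β) :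
    MI p X Y = cMI p X Y (fun _ => ()) := by
  have h1 : H p (fun ω => (X ω, ())) = H p X :=
    H_map p X (fun a => (a, ())) (fun a b h => congrArg Prod.fst h)
  have h2 : H p (fun ω => (Y ω, ())) = H p Y :=
    H_map p Y (fun a => (a, ())) (fun a b h => congrArg Prod.fst h)
  have h3 : H p (fun ω => (X ω, (Y ω, ()))) = H p (fun ω => (X ω, Y ω)) :=
    H_map p (fun ω => (X ω, Y ω)) (fun w => (w.1, (w.2, ())))
      (fun w w' h => by
        obtain ⟨hA, hB⟩ := Prod.mk.injEq _ _ _ _ ▸ h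
        exact Prod.ext hA (congrArg Prod.fst hB))
  unfold MI cMI Hc
  rw [h1, h2, h3, H_unit p hp1]
  ring

lemma MI_nonneg (p : Ω → ℝ) (X : Ω → α) (Y : Ω → β) (hp : IsPMF p) : 0 ≤ MI p X Y := by
  rw [MI_eq_cMI_unit p hp.2]
  exact cMI_nonneg p X Y _ hp

lemma ker_sum_right {ι : Type*} [Fintype ι] (k : ι → ℝ) (hk : ∑ i, k i = 1) (r : ℝ) :
    ∑ i, k i * r = r := by rw [← Finset.sum_mul, hk, one_mul]

lemma ker_sum_mid {ι : Type*} [Fintype ι] (k : ι → ℝ) (hk : ∑ i, k i = 1) (s r : ℝ) :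
    ∑ i, s * (k i * r) = s * r := by
  rw [← Finset.mul_sum, ker_sum_right k hk r]

lemma ker_sum2 {ι κ : Type*} [Fintype ι] [Fintype κ] (k : ι → ℝ) (l : κ → ℝ)
    (hk : ∑ i, k i = 1) (hl : ∑ j, l j = 1) (r : ℝ) :
    ∑ i, ∑ j, k i * (l j * r) = r := by
  rw [Finset.sum_congr rfl (fun i _ => ker_sum_mid l hl (k i) r), ker_sum_right k hk]

section marginals
variable {𝒜 𝒞 ℰ 𝒰 𝒱 : Type}
    [Fintype 𝒜] [Fintype 𝒞] [Fintype ℰ] [Fintype 𝒰] [Fintype 𝒱]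
    (p : 𝒜 × 𝒞 × ℰ → ℝ)
    (pU : 𝒜 → 𝒰 → ℝ)
    (pV : 𝒞 → 𝒱 → ℝ)
    (q : 𝒜 × 𝒞 × ℰ × 𝒰 × 𝒱 → ℝ)
    (hpU : IsKernel pU) (hpV : IsKernel pV)
    (hq : ∀ x, q x = p (x.1, x.2.1, x.2.2.1) * pU x.1 x.2.2.2.1 * pV x.2.1 x.2.2.2.2)
include hq hpU hpV

lemma M1 (u : 𝒰) (v : 𝒱) (a : 𝒜) :
    pr q (fun x => (x.2.2.2.1, x.2.2.2.2, x.1)) (u, v, a)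
      = pU a u * ∑ c, (∑ e, p (a, c, e)) * pV c v := by
  classical
  unfold pr
  simp only [hq, Fintype.sum_prod_type, Prod.mk.injEq]
  simp [ite_and, Finset.sum_ite_eq, Finset.sum_ite_eq', Finset.mul_sum, Finset.sum_mul, mul_ite,
    ite_mul, mul_comm, mul_assoc, mul_left_comm]

lemma M2 (a : 𝒜) :
    pr q (fun x => x.1) a = ∑ c, ∑ e, p (a, c, e) := by
  classical
  unfold pr
  simp only [hq, Fintype.sum_prod_type, Prod.mk.injEq]
  simp [ite_and, Finset.sum_ite_eq, Finset.sum_ite_eq', Finset.mul_sum, Finset.sum_mul, mul_ite,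
    ite_mul, mul_comm, mul_assoc, mul_left_comm]
  exact Finset.sum_congr rfl fun c _ => Finset.sum_congr rfl fun e _ =>
    ker_sum2 (pU a) (pV c) (hpU a).2 (hpV c).2 _

lemma M3 (u : 𝒰) (a : 𝒜) :
    pr q (fun x => (x.2.2.2.1, x.1)) (u, a) = pU a u * ∑ c, ∑ e, p (a, c, e) := by
  classical
  unfold pr
  simp only [hq, Fintype.sum_prod_type, Prod.mk.injEq]
  simp [ite_and, Finset.sum_ite_eq, Finset.sum_ite_eq', Finset.mul_sum, Finset.sum_mul, mul_ite,
    ite_mul, mul_comm, mul_assoc, mul_left_comm]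
  exact Finset.sum_congr rfl fun c _ => Finset.sum_congr rfl fun e _ =>
    ker_sum_mid (pV c) (hpV c).2 _ _

lemma M4 (v : 𝒱) (a : 𝒜) :
    pr q (fun x => (x.2.2.2.2, x.1)) (v, a) = ∑ c, (∑ e, p (a, c, e)) * pV c v := by
  classical
  unfold pr
  simp only [hq, Fintype.sum_prod_type, Prod.mk.injEq]
  simp [ite_and, Finset.sum_ite_eq, Finset.sum_ite_eq', Finset.mul_sum, Finset.sum_mul, mul_ite,
    ite_mul, mul_comm, mul_assoc, mul_left_comm]
  exact Finset.sum_congr rfl fun c _ => Finset.sum_congr rfl fun e _ =>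
    ker_sum_right (pU a) (hpU a).2 _

lemma M5 (a : 𝒜) (v : 𝒱) (c : 𝒞) :
    pr q (fun x => (x.1, x.2.2.2.2, x.2.1)) (a, v, c) = (∑ e, p (a, c, e)) * pV c v := by
  classical
  unfold pr
  simp only [hq, Fintype.sum_prod_type, Prod.mk.injEq]
  simp [ite_and, Finset.sum_ite_eq, Finset.sum_ite_eq', Finset.mul_sum, Finset.sum_mul, mul_ite,
    ite_mul, mul_comm, mul_assoc, mul_left_comm]
  exact Finset.sum_congr rfl fun e _ => ker_sum_right (pU a) (hpU a).2 _

lemma M6 (c : 𝒞) :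
    pr q (fun x => x.2.1) c = ∑ a, ∑ e, p (a, c, e) := by
  classical
  unfold pr
  simp only [hq, Fintype.sum_prod_type, Prod.mk.injEq]
  simp [ite_and, Finset.sum_ite_eq, Finset.sum_ite_eq', Finset.mul_sum, Finset.sum_mul, mul_ite,
    ite_mul, mul_comm, mul_assoc, mul_left_comm]
  exact Finset.sum_congr rfl fun a _ => Finset.sum_congr rfl fun e _ =>
    ker_sum2 (pU a) (pV c) (hpU a).2 (hpV c).2 _

lemma M7 (a : 𝒜) (c : 𝒞) :
    pr q (fun x => (x.1, x.2.1)) (a, c) = ∑ e, p (a, c, e) := by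
  classical
  unfold pr
  simp only [hq, Fintype.sum_prod_type, Prod.mk.injEq]
  simp [ite_and, Finset.sum_ite_eq, Finset.sum_ite_eq', Finset.mul_sum, Finset.sum_mul, mul_ite,
    ite_mul, mul_comm, mul_assoc, mul_left_comm]
  exact Finset.sum_congr rfl fun e _ =>
    ker_sum2 (pU a) (pV c) (hpU a).2 (hpV c).2 _

lemma M8 (v : 𝒱) (c : 𝒞) :
    pr q (fun x => (x.2.2.2.2, x.2.1)) (v, c) = (∑ a, ∑ e, p (a, c, e)) * pV c v := by
  classical
  unfold pr
  simp only [hq, Fintype.sum_prod_type, Prod.mk.injEq]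
  simp [ite_and, Finset.sum_ite_eq, Finset.sum_ite_eq', Finset.mul_sum, Finset.sum_mul, mul_ite,
    ite_mul, mul_comm, mul_assoc, mul_left_comm]
  exact Finset.sum_congr rfl fun a _ => Finset.sum_congr rfl fun e _ =>
    ker_sum_right (pU a) (hpU a).2 _

lemma sumq (hp1 : ∑ x, p x = 1) : ∑ x, q x = 1 := by
  classical
  simp only [hq, Fintype.sum_prod_type]
  simp [Finset.mul_sum, Finset.sum_mul, mul_ite,
    ite_mul, mul_comm, mul_assoc, mul_left_comm]
  have : ∀ a c e, ∑ u, ∑ v, pU a u * (pV c v * p (a, c, e)) = p (a, c, e) :=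
    fun a c e => ker_sum2 (pU a) (pV c) (hpU a).2 (hpV c).2 _
  rw [Finset.sum_congr rfl fun a _ => Finset.sum_congr rfl fun c _ =>
    Finset.sum_congr rfl fun e _ => this a c e]
  rw [← hp1]
  simp [Fintype.sum_prod_type]

end marginals

end InnerAux


/-- Inner-bound auxiliary inequality I: if the joint pmf of `(A, C, E, U, V)` factorizes as
`p_{ACE} · p_{U|A} · p_{V|C}` and `H(C|A,V) = 0`, then
`I(A;V|U) − I(A;E|U) ≤ I(A;C)`. -/
theorem inner_aux_ineq_I {𝒜 𝒞 ℰ 𝒰 𝒱 : Type}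
    [Fintype 𝒜] [Fintype 𝒞] [Fintype ℰ] [Fintype 𝒰] [Fintype 𝒱]
    (p : 𝒜 × 𝒞 × ℰ → ℝ) (hp : IsPMF p)
    (pU : 𝒜 → 𝒰 → ℝ) (hpU : IsKernel pU)
    (pV : 𝒞 → 𝒱 → ℝ) (hpV : IsKernel pV)
    (q : 𝒜 × 𝒞 × ℰ × 𝒰 × 𝒱 → ℝ)
    (hq : ∀ x, q x = p (x.1, x.2.1, x.2.2.1) * pU x.1 x.2.2.2.1 * pV x.2.1 x.2.2.2.2)
    (hCAV : Hc q (fun x => x.2.1) (fun x => (x.1, x.2.2.2.2)) = 0) :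
    cMI q (fun x => x.1) (fun x => x.2.2.2.2) (fun x => x.2.2.2.1) -
      cMI q (fun x => x.1) (fun x => x.2.2.1) (fun x => x.2.2.2.1) ≤
      MI q (fun x => x.1) (fun x => x.2.1) := by
  
  classical
  have hq0 : ∀ x, 0 ≤ q x := fun x => by
    rw [hq x]
    exact mul_nonneg (mul_nonneg (hp.1 _) ((hpU _).1 _)) ((hpV _).1 _)
  have hqPMF : IsPMF q := ⟨hq0, InnerAux.sumq p pU pV q hpU hpV hq hp.2⟩
  -- I(U;V|A) = 0
  have markov1 : cMI q (fun x => x.2.2.2.1) (fun x => x.2.2.2.2) (fun x => x.1) = 0 := by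
    apply InnerAux.cMI_eq_zero _ _ _ _ hq0
    rintro ⟨u, v, a⟩
    show pr q (fun x => (x.2.2.2.1, x.2.2.2.2, x.1)) (u, v, a) * pr q (fun x => x.1) a =
      pr q (fun x => (x.2.2.2.1, x.1)) (u, a) * pr q (fun x => (x.2.2.2.2, x.1)) (v, a)
    rw [InnerAux.M1 p pU pV q hpU hpV hq u v a, InnerAux.M2 p pU pV q hpU hpV hq a,
      InnerAux.M3 p pU pV q hpU hpV hq u a, InnerAux.M4 p pU pV q hpU hpV hq v a]
    ring
  -- I(A;V|C) = 0
  have markov2 : cMI q (fun x => x.1) (fun x => x.2.2.2.2) (fun x => x.2.1) = 0 := by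
    apply InnerAux.cMI_eq_zero _ _ _ _ hq0
    rintro ⟨a, v, c⟩
    show pr q (fun x => (x.1, x.2.2.2.2, x.2.1)) (a, v, c) * pr q (fun x => x.2.1) c =
      pr q (fun x => (x.1, x.2.1)) (a, c) * pr q (fun x => (x.2.2.2.2, x.2.1)) (v, c)
    rw [InnerAux.M5 p pU pV q hpU hpV hq a v c, InnerAux.M6 p pU pV q hpU hpV hq c,
      InnerAux.M7 p pU pV q hpU hpV hq a c, InnerAux.M8 p pU pV q hpU hpV hq v c]
    ring
  -- nonnegativity facts
  have n1 : 0 ≤ cMI q (fun x => x.1) (fun x => x.2.1) (fun x => x.2.2.2.2) :=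
    InnerAux.cMI_nonneg q _ _ _ hqPMF
  have n2 : 0 ≤ MI q (fun x => x.2.2.2.1) (fun x => x.2.2.2.2) :=
    InnerAux.MI_nonneg q _ _ hqPMF
  have n3 : 0 ≤ cMI q (fun x => x.1) (fun x => x.2.2.1) (fun x => x.2.2.2.1) :=
    InnerAux.cMI_nonneg q _ _ _ hqPMF
  -- relabelling equalities for entropies
  have E1 : H q (fun x : 𝒜 × 𝒞 × ℰ × 𝒰 × 𝒱 => (x.1, x.2.2.2.2))
      = H q (fun x => (x.2.2.2.2, x.1)) :=
    InnerAux.H_map q (fun x => (x.2.2.2.2, x.1)) Prod.swap Prod.swap_injective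
  have E2 : H q (fun x : 𝒜 × 𝒞 × ℰ × 𝒰 × 𝒱 => (x.1, (x.2.2.2.2, x.2.1)))
      = H q (fun x => (x.1, (x.2.1, x.2.2.2.2))) :=
    InnerAux.H_map q (fun x => (x.1, (x.2.1, x.2.2.2.2))) (fun w => (w.1, (w.2.2, w.2.1)))
      (fun w w' h => by simp only [Prod.ext_iff] at h ⊢; tauto)
  have E3 : H q (fun x : 𝒜 × 𝒞 × ℰ × 𝒰 × 𝒱 => (x.2.1, x.2.2.2.2))
      = H q (fun x => (x.2.2.2.2, x.2.1)) :=
    InnerAux.H_map q (fun x => (x.2.2.2.2, x.2.1)) Prod.swap Prod.swap_injective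
  have E4 : H q (fun x : 𝒜 × 𝒞 × ℰ × 𝒰 × 𝒱 => (x.1, x.2.2.2.1))
      = H q (fun x => (x.2.2.2.1, x.1)) :=
    InnerAux.H_map q (fun x => (x.2.2.2.1, x.1)) Prod.swap Prod.swap_injective
  have E5 : H q (fun x : 𝒜 × 𝒞 × ℰ × 𝒰 × 𝒱 => (x.2.2.2.2, x.2.2.2.1))
      = H q (fun x => (x.2.2.2.1, x.2.2.2.2)) :=
    InnerAux.H_map q (fun x => (x.2.2.2.1, x.2.2.2.2)) Prod.swap Prod.swap_injective
  have E6 : H q (fun x : 𝒜 × 𝒞 × ℰ × 𝒰 × 𝒱 => (x.2.2.2.1, (x.2.2.2.2, x.1)))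
      = H q (fun x => (x.1, (x.2.2.2.2, x.2.2.2.1))) :=
    InnerAux.H_map q (fun x => (x.1, (x.2.2.2.2, x.2.2.2.1)))
      (fun w => (w.2.2, (w.2.1, w.1)))
      (fun w w' h => by simp only [Prod.ext_iff] at h ⊢; tauto)
  -- the chain-rule identity
  have idH : MI q (fun x => x.1) (fun x => x.2.1) -
        cMI q (fun x => x.1) (fun x => x.2.2.2.2) (fun x => x.2.2.2.1)
      = cMI q (fun x => x.1) (fun x => x.2.1) (fun x => x.2.2.2.2) -
          cMI q (fun x => x.1) (fun x => x.2.2.2.2) (fun x => x.2.1)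
        + MI q (fun x => x.2.2.2.1) (fun x => x.2.2.2.2)
        - cMI q (fun x => x.2.2.2.1) (fun x => x.2.2.2.2) (fun x => x.1) := by
    simp only [MI, cMI, Hc]
    linarith [E1, E2, E3, E4, E5, E6]
  linarith [idH, markov1, markov2, n1, n2, n3]
end
end

section
/- (Inner-bound auxiliary inequality II.) Let (A, C, E, U, V) be finite-valued random variables whose joint pmf factorizes as p_{ACE}(a,c,e)·p_{U|A}(u|a)·p_{V|C}(v|c), and suppose H(C|A,V) = 0. Then I(A;V|U) − I(A;E|U) ≤ I(C;V) − H(C|A). -/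
open scoped BigOperators

noncomputable section

open SSW

open scoped Classical

section Basic
open Finset
variable {Ω α β γ : Type*} [Fintype Ω] (p : Ω → ℝ)

lemma pr_nonneg (hp : ∀ ω, 0 ≤ p ω) (X : Ω → α) (x : α) : 0 ≤ pr p X x := by
  refine Finset.sum_nonneg fun ω _ => ?_
  split <;> simp [hp ω]

lemma pr_id (ω0 : Ω) : pr p (fun ω => ω) ω0 = p ω0 := by
  unfold pr
  rw [Finset.sum_eq_single ω0] <;> simp +contextual

lemma pr_comp [Fintype α] (X : Ω → α) (f : α → β) (b : β) :
    pr p (fun ω => f (X ω)) b = ∑ a, if f a = b then pr p X a else 0 := by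
  unfold pr
  calc (∑ ω : Ω, if f (X ω) = b then p ω else 0)
      = ∑ ω : Ω, ∑ a : α, (if f a = b then (if X ω = a then p ω else 0) else 0) := by
        refine Finset.sum_congr rfl fun ω _ => ?_
        by_cases h : f (X ω) = b
        · rw [if_pos h, Finset.sum_eq_single (X ω)]
          · simp [h]
          · intro a _ ha
            by_cases hxa : X ω = a
            · exact absurd hxa.symm ha
            · simp [hxa]
          · simp
        · rw [if_neg h]
          refine (Finset.sum_eq_zero fun a _ => ?_).symm
          by_cases hxa : X ω = a
          · subst hxa; simp [h]
          · simp [hxa]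
    _ = ∑ a : α, ∑ ω : Ω, (if f a = b then (if X ω = a then p ω else 0) else 0) :=
        Finset.sum_comm
    _ = ∑ a, if f a = b then pr p X a else 0 := by
        refine Finset.sum_congr rfl fun a _ => ?_
        by_cases h : f a = b <;> simp [h, pr]

end Basic

section Derived
open Finset
variable {Ω α β γ : Type*} [Fintype Ω] (p : Ω → ℝ)

lemma pr_comp_inj [Fintype α] (X : Ω → α) {f : α → β} (hf : Function.Injective f) (a : α) :
    pr p (fun ω => f (X ω)) (f a) = pr p X a := by
  rw [pr_comp]
  rw [Finset.sum_eq_single a]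
  · simp
  · intro a' _ ha'; rw [if_neg (fun h => ha' (hf h))]
  · simp

lemma pr_comp_notin [Fintype α] (X : Ω → α) (f : α → β) (b : β) (hb : ∀ a, f a ≠ b) :
    pr p (fun ω => f (X ω)) b = 0 := by
  rw [pr_comp]
  exact Finset.sum_eq_zero fun a _ => by simp [hb a]

lemma H_comp_inj [Fintype α] [Fintype β] (X : Ω → α) {f : α → β}
    (hf : Function.Injective f) : H p (fun ω => f (X ω)) = H p X := by
  unfold H
  rw [← Finset.sum_subset (Finset.subset_univ (Finset.image f univ))
    (fun b _ hb => by
      have : ∀ a, f a ≠ b := by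
        intro a ha; exact hb (Finset.mem_image.2 ⟨a, Finset.mem_univ a, ha⟩)
      rw [pr_comp_notin p X f b this]; simp)]
  rw [Finset.sum_image (fun a _ a' _ h => hf h)]
  exact Finset.sum_congr rfl fun a _ => by rw [pr_comp_inj p X hf]

end Derived
section Marg
open Finset
variable {Ω α β γ : Type*} [Fintype Ω] [Fintype α] [Fintype β] [Fintype γ]
variable (p : Ω → ℝ) (X : Ω → α) (Y : Ω → β) (Z : Ω → γ)

lemma marg_snd (x : α) : pr p X x = ∑ y, pr p (fun ω => (X ω, Y ω)) (x, y) := by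
  have h : pr p (fun ω => Prod.fst (X ω, Y ω)) x
      = ∑ a : α × β, if a.1 = x then pr p (fun ω => (X ω, Y ω)) a else 0 :=
    pr_comp p _ Prod.fst x
  rw [show pr p X x = pr p (fun ω => Prod.fst (X ω, Y ω)) x from rfl, h,
    Fintype.sum_prod_type]
  rw [Finset.sum_eq_single x]
  · simp
  · intro a _ ha
    refine Finset.sum_eq_zero fun b _ => ?_
    rw [if_neg (by simpa using ha)]
  · simp

lemma pr_XZ_eq (x : α) (z : γ) :
    pr p (fun ω => (X ω, Z ω)) (x, z)
      = ∑ y, pr p (fun ω => (X ω, Y ω, Z ω)) (x, y, z) := by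
  have h := marg_snd p (fun ω => (X ω, Z ω)) Y (x, z)
  rw [h]
  refine Finset.sum_congr rfl fun y _ => ?_
  have hf : Function.Injective (fun t : α × β × γ => ((t.1, t.2.2), t.2.1)) := by
    intro t s h; simp only [Prod.mk.injEq] at h
    exact Prod.ext h.1.1 (Prod.ext h.2 h.1.2)
  exact pr_comp_inj p (fun ω => (X ω, Y ω, Z ω)) hf (x, y, z)

lemma pr_YZ_eq (y : β) (z : γ) :
    pr p (fun ω => (Y ω, Z ω)) (y, z)
      = ∑ x, pr p (fun ω => (X ω, Y ω, Z ω)) (x, y, z) := by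
  have h := marg_snd p (fun ω => (Y ω, Z ω)) X (y, z)
  rw [h]
  refine Finset.sum_congr rfl fun x _ => ?_
  have hf : Function.Injective (fun t : α × β × γ => ((t.2.1, t.2.2), t.1)) := by
    intro t s h; simp only [Prod.mk.injEq] at h
    exact Prod.ext h.2 (Prod.ext h.1.1 h.1.2)
  exact pr_comp_inj p (fun ω => (X ω, Y ω, Z ω)) hf (x, y, z)

lemma pr_Z_eq (z : γ) :
    pr p Z z = ∑ x, ∑ y, pr p (fun ω => (X ω, Y ω, Z ω)) (x, y, z) := by
  have h := marg_snd p Z (fun ω => (X ω, Y ω)) z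
  rw [h, Fintype.sum_prod_type]
  refine Finset.sum_congr rfl fun x _ => Finset.sum_congr rfl fun y _ => ?_
  have hf : Function.Injective (fun t : α × β × γ => (t.2.2, t.1, t.2.1)) := by
    intro t s h; simp only [Prod.mk.injEq] at h
    exact Prod.ext h.2.1 (Prod.ext h.2.2 h.1)
  exact pr_comp_inj p (fun ω => (X ω, Y ω, Z ω)) hf (x, y, z)

lemma pr3_le_XZ (hp : ∀ ω, 0 ≤ p ω) (x : α) (y : β) (z : γ) :
    pr p (fun ω => (X ω, Y ω, Z ω)) (x, y, z) ≤ pr p (fun ω => (X ω, Z ω)) (x, z) := by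
  rw [pr_XZ_eq p X Y Z]
  exact Finset.single_le_sum
    (f := fun y' => pr p (fun ω => (X ω, Y ω, Z ω)) (x, y', z))
    (fun b _ => pr_nonneg p hp _ _) (Finset.mem_univ y)

lemma pr3_le_YZ (hp : ∀ ω, 0 ≤ p ω) (x : α) (y : β) (z : γ) :
    pr p (fun ω => (X ω, Y ω, Z ω)) (x, y, z) ≤ pr p (fun ω => (Y ω, Z ω)) (y, z) := by
  rw [pr_YZ_eq p X Y Z]
  exact Finset.single_le_sum
    (f := fun x' => pr p (fun ω => (X ω, Y ω, Z ω)) (x', y, z))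
    (fun b _ => pr_nonneg p hp _ _) (Finset.mem_univ x)

lemma pr3_le_Z (hp : ∀ ω, 0 ≤ p ω) (x : α) (y : β) (z : γ) :
    pr p (fun ω => (X ω, Y ω, Z ω)) (x, y, z) ≤ pr p Z z := by
  rw [pr_Z_eq p X Y Z]
  calc pr p (fun ω => (X ω, Y ω, Z ω)) (x, y, z)
      ≤ ∑ y', pr p (fun ω => (X ω, Y ω, Z ω)) (x, y', z) :=
        Finset.single_le_sum
          (f := fun y' => pr p (fun ω => (X ω, Y ω, Z ω)) (x, y', z))
          (fun b _ => pr_nonneg p hp _ _) (Finset.mem_univ y)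
    _ ≤ _ := Finset.single_le_sum
        (f := fun x' => ∑ y', pr p (fun ω => (X ω, Y ω, Z ω)) (x', y', z))
        (fun b _ => Finset.sum_nonneg fun c _ => pr_nonneg p hp _ _) (Finset.mem_univ x)

end Marg

section Collapse
open Finset
variable {Ω α β γ : Type*} [Fintype Ω] [Fintype α] [Fintype β] [Fintype γ]
variable (p : Ω → ℝ) (X : Ω → α) (Y : Ω → β) (Z : Ω → γ)

lemma sum_pr : ∑ x, pr p X x = ∑ ω, p ω := by
  unfold pr
  rw [Finset.sum_comm]
  refine Finset.sum_congr rfl fun ω _ => ?_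
  rw [Finset.sum_eq_single (X ω)] <;> simp +contextual [eq_comm]

lemma marg_fst (y : β) : pr p Y y = ∑ x, pr p (fun ω => (X ω, Y ω)) (x, y) := by
  rw [marg_snd p Y X y]
  refine Finset.sum_congr rfl fun x _ => ?_
  have hf : Function.Injective (fun t : α × β => (t.2, t.1)) := by
    intro t s h; simp only [Prod.mk.injEq] at h; exact Prod.ext h.2 h.1
  exact pr_comp_inj p (fun ω => (X ω, Y ω)) hf (x, y)

lemma pr2_le_fst (hp : ∀ ω, 0 ≤ p ω) (x : α) (y : β) :
    pr p (fun ω => (X ω, Y ω)) (x, y) ≤ pr p X x := by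
  rw [marg_snd p X Y x]
  exact Finset.single_le_sum
    (f := fun y' => pr p (fun ω => (X ω, Y ω)) (x, y'))
    (fun b _ => pr_nonneg p hp _ _) (Finset.mem_univ y)

lemma pr2_le_snd (hp : ∀ ω, 0 ≤ p ω) (x : α) (y : β) :
    pr p (fun ω => (X ω, Y ω)) (x, y) ≤ pr p Y y := by
  rw [marg_fst p X Y y]
  exact Finset.single_le_sum
    (f := fun x' => pr p (fun ω => (X ω, Y ω)) (x', y))
    (fun b _ => pr_nonneg p hp _ _) (Finset.mem_univ x)

lemma sum2_weight_fst (g : α → ℝ) :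
    ∑ t : α × β, pr p (fun ω => (X ω, Y ω)) t * g t.1 = ∑ x, pr p X x * g x := by
  rw [Fintype.sum_prod_type (f := fun t : α × β => pr p (fun ω => (X ω, Y ω)) t * g t.1)]
  refine Finset.sum_congr rfl fun x _ => ?_
  dsimp only
  rw [← Finset.sum_mul, ← marg_snd p X Y x]

lemma sum2_weight_snd (g : β → ℝ) :
    ∑ t : α × β, pr p (fun ω => (X ω, Y ω)) t * g t.2 = ∑ y, pr p Y y * g y := by
  rw [Fintype.sum_prod_type (f := fun t : α × β => pr p (fun ω => (X ω, Y ω)) t * g t.2),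
    Finset.sum_comm]
  refine Finset.sum_congr rfl fun y _ => ?_
  dsimp only
  rw [← Finset.sum_mul, ← marg_fst p X Y y]

lemma sum3_weight_xz (g : α → γ → ℝ) :
    ∑ t : α × β × γ, pr p (fun ω => (X ω, Y ω, Z ω)) t * g t.1 t.2.2
      = ∑ x, ∑ z, pr p (fun ω => (X ω, Z ω)) (x, z) * g x z := by
  rw [Fintype.sum_prod_type
    (f := fun t : α × β × γ => pr p (fun ω => (X ω, Y ω, Z ω)) t * g t.1 t.2.2)]
  refine Finset.sum_congr rfl fun x _ => ?_
  dsimp only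
  rw [Fintype.sum_prod_type
    (f := fun j : β × γ => pr p (fun ω => (X ω, Y ω, Z ω)) (x, j) * g x j.2),
    Finset.sum_comm]
  refine Finset.sum_congr rfl fun z _ => ?_
  dsimp only
  rw [← Finset.sum_mul, ← pr_XZ_eq p X Y Z x z]

lemma sum3_weight_yz (g : β → γ → ℝ) :
    ∑ t : α × β × γ, pr p (fun ω => (X ω, Y ω, Z ω)) t * g t.2.1 t.2.2
      = ∑ y, ∑ z, pr p (fun ω => (Y ω, Z ω)) (y, z) * g y z := by
  rw [Fintype.sum_prod_type
    (f := fun t : α × β × γ => pr p (fun ω => (X ω, Y ω, Z ω)) t * g t.2.1 t.2.2),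
    Finset.sum_comm]
  rw [Fintype.sum_prod_type
    (f := fun j : β × γ => ∑ x : α, pr p (fun ω => (X ω, Y ω, Z ω)) (x, j) * g j.1 j.2)]
  refine Finset.sum_congr rfl fun y _ => Finset.sum_congr rfl fun z _ => ?_
  dsimp only
  rw [← Finset.sum_mul, ← pr_YZ_eq p X Y Z y z]

lemma sum3_weight_z (g : γ → ℝ) :
    ∑ t : α × β × γ, pr p (fun ω => (X ω, Y ω, Z ω)) t * g t.2.2
      = ∑ z, pr p Z z * g z := by
  rw [Fintype.sum_prod_type
    (f := fun t : α × β × γ => pr p (fun ω => (X ω, Y ω, Z ω)) t * g t.2.2)]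
  have step : ∀ x : α,
      (∑ j : β × γ, pr p (fun ω => (X ω, Y ω, Z ω)) (x, j) * g j.2)
      = ∑ z, ∑ y, pr p (fun ω => (X ω, Y ω, Z ω)) (x, y, z) * g z := by
    intro x
    rw [Fintype.sum_prod_type
      (f := fun j : β × γ => pr p (fun ω => (X ω, Y ω, Z ω)) (x, j) * g j.2),
      Finset.sum_comm]
  rw [Finset.sum_congr rfl fun x _ => step x, Finset.sum_comm]
  refine Finset.sum_congr rfl fun z _ => ?_
  have : (∑ x, ∑ y, pr p (fun ω => (X ω, Y ω, Z ω)) (x, y, z) * g z)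
      = (∑ x, ∑ y, pr p (fun ω => (X ω, Y ω, Z ω)) (x, y, z)) * g z := by
    rw [Finset.sum_mul]
    exact Finset.sum_congr rfl fun x _ => by rw [Finset.sum_mul]
  rw [this, ← pr_Z_eq p X Y Z z]

end Collapse

section Gibbs
open Finset Real

lemma gibbs_pt (a b : ℝ) (ha : 0 ≤ a) (hb : 0 ≤ b) (hab : a ≠ 0 → b ≠ 0) :
    a * Real.logb 2 b - a * Real.logb 2 a ≤ (b - a) / Real.log 2 := by
  rcases eq_or_lt_of_le ha with h0 | hapos
  · rw [← h0]
    simp only [zero_mul, sub_zero, sub_self]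
    exact div_nonneg (by simpa [← h0] using hb) (Real.log_nonneg one_le_two)
  · have hbpos : 0 < b := (hb.lt_of_ne' (hab hapos.ne'))
    have hlog := Real.log_le_sub_one_of_pos (div_pos hbpos hapos)
    rw [Real.log_div hbpos.ne' hapos.ne'] at hlog
    have h2 : a * (Real.log b - Real.log a) ≤ a * (b / a - 1) :=
      mul_le_mul_of_nonneg_left hlog ha
    have h3 : a * (b / a - 1) = b - a := by field_simp
    have hl2 : (0:ℝ) < Real.log 2 := Real.log_pos (by norm_num)
    rw [h3] at h2
    have h4 : a * Real.logb 2 b - a * Real.logb 2 a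
        = (a * (Real.log b - Real.log a)) / Real.log 2 := by
      rw [Real.logb, Real.logb]; field_simp
    rw [h4]
    gcongr

end Gibbs


section Main
open Finset Real
variable {Ω α β γ : Type*} [Fintype Ω] [Fintype α] [Fintype β] [Fintype γ]
variable (p : Ω → ℝ) (X : Ω → α) (Y : Ω → β) (Z : Ω → γ)

lemma H_eq_neg_sum : H p X = -∑ x, pr p X x * Real.logb 2 (pr p X x) := by
  unfold H; rw [Finset.sum_neg_distrib]

lemma H_pair_eq (W : Ω → α × γ) :
    H p W = -∑ x, ∑ z, pr p W (x, z) * Real.logb 2 (pr p W (x, z)) := by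
  rw [H_eq_neg_sum, Fintype.sum_prod_type
    (f := fun s : α × γ => pr p W s * Real.logb 2 (pr p W s))]

lemma sum_pr_XZ (Y : Ω → β) (z : γ) :
    ∑ x, pr p (fun ω => (X ω, Z ω)) (x, z) = pr p Z z := by
  rw [pr_Z_eq p X Y Z z]
  exact Finset.sum_congr rfl fun x _ => pr_XZ_eq p X Y Z x z

lemma sum_pr_YZ (X : Ω → α) (z : γ) :
    ∑ y, pr p (fun ω => (Y ω, Z ω)) (y, z) = pr p Z z := by
  rw [pr_Z_eq p X Y Z z, Finset.sum_comm]
  exact Finset.sum_congr rfl fun y _ => pr_YZ_eq p X Y Z y z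

lemma condIndep_H (hp : ∀ ω, 0 ≤ p ω)
    (hM : ∀ x y z,
      pr p (fun ω => (X ω, Y ω, Z ω)) (x, y, z) * pr p Z z =
        pr p (fun ω => (X ω, Z ω)) (x, z) * pr p (fun ω => (Y ω, Z ω)) (y, z)) :
    H p (fun ω => (X ω, Y ω, Z ω)) + H p Z
      = H p (fun ω => (X ω, Z ω)) + H p (fun ω => (Y ω, Z ω)) := by
  set q3 := pr p (fun ω => (X ω, Y ω, Z ω)) with hq3
  have key : ∀ t : α × β × γ,
      q3 t * Real.logb 2 (q3 t) + q3 t * Real.logb 2 (pr p Z t.2.2)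
      = q3 t * Real.logb 2 (pr p (fun ω => (X ω, Z ω)) (t.1, t.2.2))
        + q3 t * Real.logb 2 (pr p (fun ω => (Y ω, Z ω)) (t.2.1, t.2.2)) := by
    rintro ⟨x, y, z⟩
    dsimp only
    by_cases h0 : q3 (x, y, z) = 0
    · rw [h0]; ring
    · have hq3pos : 0 < q3 (x, y, z) :=
        lt_of_le_of_ne (pr_nonneg p hp _ _) (Ne.symm h0)
      have hxz : 0 < pr p (fun ω => (X ω, Z ω)) (x, z) :=
        lt_of_lt_of_le hq3pos (pr3_le_XZ p X Y Z hp x y z)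
      have hyz : 0 < pr p (fun ω => (Y ω, Z ω)) (y, z) :=
        lt_of_lt_of_le hq3pos (pr3_le_YZ p X Y Z hp x y z)
      have hz : 0 < pr p Z z :=
        lt_of_lt_of_le hq3pos (pr3_le_Z p X Y Z hp x y z)
      have hlog : Real.logb 2 (q3 (x, y, z)) + Real.logb 2 (pr p Z z)
          = Real.logb 2 (pr p (fun ω => (X ω, Z ω)) (x, z))
            + Real.logb 2 (pr p (fun ω => (Y ω, Z ω)) (y, z)) := by
        rw [← Real.logb_mul h0 hz.ne', ← Real.logb_mul hxz.ne' hyz.ne', hM x y z]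
      linear_combination q3 (x, y, z) * hlog
  have e1 : ∑ t : α × β × γ, (q3 t * Real.logb 2 (q3 t)
        + q3 t * Real.logb 2 (pr p Z t.2.2))
      = ∑ t : α × β × γ,
        (q3 t * Real.logb 2 (pr p (fun ω => (X ω, Z ω)) (t.1, t.2.2))
        + q3 t * Real.logb 2 (pr p (fun ω => (Y ω, Z ω)) (t.2.1, t.2.2))) :=
    Finset.sum_congr rfl fun t _ => key t
  rw [Finset.sum_add_distrib, Finset.sum_add_distrib] at e1
  rw [sum3_weight_z p X Y Z (fun z => Real.logb 2 (pr p Z z))] at e1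
  rw [sum3_weight_xz p X Y Z
    (fun x z => Real.logb 2 (pr p (fun ω => (X ω, Z ω)) (x, z)))] at e1
  rw [sum3_weight_yz p X Y Z
    (fun y z => Real.logb 2 (pr p (fun ω => (Y ω, Z ω)) (y, z)))] at e1
  have hxyz : H p (fun ω => (X ω, Y ω, Z ω)) = -∑ t, q3 t * Real.logb 2 (q3 t) :=
    H_eq_neg_sum p _
  have hz' : H p Z = -∑ z, pr p Z z * Real.logb 2 (pr p Z z) := H_eq_neg_sum p Z
  have hxz' : H p (fun ω => (X ω, Z ω))
      = -∑ x, ∑ z, pr p (fun ω => (X ω, Z ω)) (x, z)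
        * Real.logb 2 (pr p (fun ω => (X ω, Z ω)) (x, z)) := H_pair_eq p _
  have hyz' : H p (fun ω => (Y ω, Z ω))
      = -∑ y, ∑ z, pr p (fun ω => (Y ω, Z ω)) (y, z)
        * Real.logb 2 (pr p (fun ω => (Y ω, Z ω)) (y, z)) := H_pair_eq p _
  rw [hxyz, hz', hxz', hyz']
  linarith [e1]

end Main

section Submod
open Finset Real
variable {Ω α β γ : Type*} [Fintype Ω] [Fintype α] [Fintype β] [Fintype γ]
variable (p : Ω → ℝ) (X : Ω → α) (Y : Ω → β) (Z : Ω → γ)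

lemma submod (hp : ∀ ω, 0 ≤ p ω) :
    H p (fun ω => (X ω, Y ω, Z ω)) + H p Z
      ≤ H p (fun ω => (X ω, Z ω)) + H p (fun ω => (Y ω, Z ω)) := by
  classical
  set q3 := pr p (fun ω => (X ω, Y ω, Z ω)) with hq3
  set b : α × β × γ → ℝ := fun t =>
    if pr p Z t.2.2 = 0 then 0 else
      pr p (fun ω => (X ω, Z ω)) (t.1, t.2.2)
        * pr p (fun ω => (Y ω, Z ω)) (t.2.1, t.2.2) / pr p Z t.2.2 with hb
  have hl2 : (0:ℝ) < Real.log 2 := Real.log_pos (by norm_num)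
  -- pointwise Gibbs
  have key : ∀ t : α × β × γ,
      q3 t * Real.logb 2 (b t) - q3 t * Real.logb 2 (q3 t)
        ≤ (b t - q3 t) / Real.log 2 := by
    intro t
    refine gibbs_pt _ _ (pr_nonneg p hp _ _) ?_ ?_
    · by_cases hz : pr p Z t.2.2 = 0
      · simp [hb, hz]
      · simp only [hb, hz, if_neg, if_false]
        have h1 : 0 ≤ pr p (fun ω => (X ω, Z ω)) (t.1, t.2.2) := pr_nonneg p hp _ _
        have h2 : 0 ≤ pr p (fun ω => (Y ω, Z ω)) (t.2.1, t.2.2) := pr_nonneg p hp _ _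
        have h3 : 0 ≤ pr p Z t.2.2 := pr_nonneg p hp _ _
        positivity
    · intro h0
      obtain ⟨x, y, z⟩ := t
      have hq3pos : 0 < q3 (x, y, z) :=
        lt_of_le_of_ne (pr_nonneg p hp _ _) (Ne.symm h0)
      have hxz : 0 < pr p (fun ω => (X ω, Z ω)) (x, z) :=
        lt_of_lt_of_le hq3pos (pr3_le_XZ p X Y Z hp x y z)
      have hyz : 0 < pr p (fun ω => (Y ω, Z ω)) (y, z) :=
        lt_of_lt_of_le hq3pos (pr3_le_YZ p X Y Z hp x y z)
      have hz : 0 < pr p Z z :=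
        lt_of_lt_of_le hq3pos (pr3_le_Z p X Y Z hp x y z)
      simp only [hb, hz.ne', if_neg, if_false]
      positivity
  -- identify q3 * logb b
  have key2 : ∀ t : α × β × γ,
      q3 t * Real.logb 2 (b t)
      = q3 t * Real.logb 2 (pr p (fun ω => (X ω, Z ω)) (t.1, t.2.2))
        + q3 t * Real.logb 2 (pr p (fun ω => (Y ω, Z ω)) (t.2.1, t.2.2))
        - q3 t * Real.logb 2 (pr p Z t.2.2) := by
    rintro ⟨x, y, z⟩
    by_cases h0 : q3 (x, y, z) = 0
    · rw [h0]; ring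
    · have hq3pos : 0 < q3 (x, y, z) :=
        lt_of_le_of_ne (pr_nonneg p hp _ _) (Ne.symm h0)
      have hxz : 0 < pr p (fun ω => (X ω, Z ω)) (x, z) :=
        lt_of_lt_of_le hq3pos (pr3_le_XZ p X Y Z hp x y z)
      have hyz : 0 < pr p (fun ω => (Y ω, Z ω)) (y, z) :=
        lt_of_lt_of_le hq3pos (pr3_le_YZ p X Y Z hp x y z)
      have hz : 0 < pr p Z z :=
        lt_of_lt_of_le hq3pos (pr3_le_Z p X Y Z hp x y z)
      have hbval : b (x, y, z) = pr p (fun ω => (X ω, Z ω)) (x, z)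
          * pr p (fun ω => (Y ω, Z ω)) (y, z) / pr p Z z := by
        simp only [hb, hz.ne', if_neg, if_false]
      rw [hbval, Real.logb_div (by positivity) hz.ne',
        Real.logb_mul hxz.ne' hyz.ne']
      ring
  -- sum of b is at most sum of q3
  have hsumb : ∑ t : α × β × γ, b t ≤ ∑ t : α × β × γ, q3 t := by
    have hbz : ∑ t : α × β × γ, b t = ∑ z, if pr p Z z = 0 then 0 else pr p Z z := by
      rw [Fintype.sum_prod_type (f := b)]
      have step : ∀ x : α, (∑ j : β × γ, b (x, j)) = ∑ z, ∑ y, b (x, y, z) := by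
        intro x
        rw [Fintype.sum_prod_type (f := fun j : β × γ => b (x, j)), Finset.sum_comm]
      rw [Finset.sum_congr rfl fun x _ => step x, Finset.sum_comm]
      refine Finset.sum_congr rfl fun z _ => ?_
      by_cases hz : pr p Z z = 0
      · rw [if_pos hz]
        refine Finset.sum_eq_zero fun x _ => Finset.sum_eq_zero fun y _ => ?_
        simp only [hb, hz, if_pos]
      · rw [if_neg hz]
        have : ∀ x y, b (x, y, z) = pr p (fun ω => (X ω, Z ω)) (x, z)
            * (pr p (fun ω => (Y ω, Z ω)) (y, z) / pr p Z z) := by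
          intro x y; simp only [hb, hz, if_neg, if_false]; ring
        rw [Finset.sum_congr rfl fun x _ => Finset.sum_congr rfl fun y _ => this x y]
        have inner : ∀ x : α, (∑ y, pr p (fun ω => (X ω, Z ω)) (x, z)
            * (pr p (fun ω => (Y ω, Z ω)) (y, z) / pr p Z z))
            = pr p (fun ω => (X ω, Z ω)) (x, z) := by
          intro x
          rw [← Finset.mul_sum, ← Finset.sum_div, sum_pr_YZ p Y Z X z,
            div_self hz, mul_one]
        rw [Finset.sum_congr rfl fun x _ => inner x, sum_pr_XZ p X Z Y z]
    have hz2 : ∑ t : α × β × γ, q3 t = ∑ z, pr p Z z := by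
      have := sum3_weight_z p X Y Z (fun _ => (1:ℝ))
      simpa using this
    rw [hbz, hz2]
    refine Finset.sum_le_sum fun z _ => ?_
    by_cases hz : pr p Z z = 0
    · rw [if_pos hz, hz]
    · rw [if_neg hz]
  -- put it together
  have total : ∑ t : α × β × γ, (q3 t * Real.logb 2 (b t) - q3 t * Real.logb 2 (q3 t))
      ≤ 0 := by
    calc ∑ t : α × β × γ, (q3 t * Real.logb 2 (b t) - q3 t * Real.logb 2 (q3 t))
        ≤ ∑ t : α × β × γ, (b t - q3 t) / Real.log 2 :=
          Finset.sum_le_sum fun t _ => key t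
      _ = (∑ t : α × β × γ, b t - ∑ t : α × β × γ, q3 t) / Real.log 2 := by
          rw [← Finset.sum_div, Finset.sum_sub_distrib]
      _ ≤ 0 := by
          apply div_nonpos_of_nonpos_of_nonneg
          · linarith [hsumb]
          · exact hl2.le
  rw [Finset.sum_sub_distrib] at total
  rw [Finset.sum_congr rfl fun t _ => key2 t] at total
  rw [Finset.sum_sub_distrib, Finset.sum_add_distrib] at total
  rw [sum3_weight_z p X Y Z (fun z => Real.logb 2 (pr p Z z))] at total
  rw [sum3_weight_xz p X Y Z
    (fun x z => Real.logb 2 (pr p (fun ω => (X ω, Z ω)) (x, z)))] at total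
  rw [sum3_weight_yz p X Y Z
    (fun y z => Real.logb 2 (pr p (fun ω => (Y ω, Z ω)) (y, z)))] at total
  have hxyz : H p (fun ω => (X ω, Y ω, Z ω)) = -∑ t, q3 t * Real.logb 2 (q3 t) :=
    H_eq_neg_sum p _
  have hz' : H p Z = -∑ z, pr p Z z * Real.logb 2 (pr p Z z) := H_eq_neg_sum p Z
  have hxz' : H p (fun ω => (X ω, Z ω))
      = -∑ x, ∑ z, pr p (fun ω => (X ω, Z ω)) (x, z)
        * Real.logb 2 (pr p (fun ω => (X ω, Z ω)) (x, z)) := H_pair_eq p _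
  have hyz' : H p (fun ω => (Y ω, Z ω))
      = -∑ y, ∑ z, pr p (fun ω => (Y ω, Z ω)) (y, z)
        * Real.logb 2 (pr p (fun ω => (Y ω, Z ω)) (y, z)) := H_pair_eq p _
  rw [hxyz, hz', hxz', hyz']
  linarith [total]

end Submod

section Subadd
open Finset Real
variable {Ω α β : Type*} [Fintype Ω] [Fintype α] [Fintype β]
variable (p : Ω → ℝ) (X : Ω → α) (Y : Ω → β)

lemma subadd (hp : ∀ ω, 0 ≤ p ω) (hp1 : ∑ ω, p ω = 1) :
    H p (fun ω => (X ω, Y ω)) ≤ H p X + H p Y := by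
  classical
  set q2 := pr p (fun ω => (X ω, Y ω)) with hq2
  set b : α × β → ℝ := fun t => pr p X t.1 * pr p Y t.2 with hb
  have hl2 : (0:ℝ) < Real.log 2 := Real.log_pos (by norm_num)
  have key : ∀ t : α × β,
      q2 t * Real.logb 2 (b t) - q2 t * Real.logb 2 (q2 t)
        ≤ (b t - q2 t) / Real.log 2 := by
    intro t
    refine gibbs_pt _ _ (pr_nonneg p hp _ _)
      (mul_nonneg (pr_nonneg p hp _ _) (pr_nonneg p hp _ _)) ?_
    intro h0
    obtain ⟨x, y⟩ := t
    have hq2pos : 0 < q2 (x, y) :=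
      lt_of_le_of_ne (pr_nonneg p hp _ _) (Ne.symm h0)
    have hx : 0 < pr p X x := lt_of_lt_of_le hq2pos (pr2_le_fst p X Y hp x y)
    have hy : 0 < pr p Y y := lt_of_lt_of_le hq2pos (pr2_le_snd p X Y hp x y)
    simp only [hb]
    positivity
  have key2 : ∀ t : α × β,
      q2 t * Real.logb 2 (b t)
      = q2 t * Real.logb 2 (pr p X t.1) + q2 t * Real.logb 2 (pr p Y t.2) := by
    rintro ⟨x, y⟩
    by_cases h0 : q2 (x, y) = 0
    · rw [h0]; ring
    · have hq2pos : 0 < q2 (x, y) :=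
        lt_of_le_of_ne (pr_nonneg p hp _ _) (Ne.symm h0)
      have hx : 0 < pr p X x := lt_of_lt_of_le hq2pos (pr2_le_fst p X Y hp x y)
      have hy : 0 < pr p Y y := lt_of_lt_of_le hq2pos (pr2_le_snd p X Y hp x y)
      have : b (x, y) = pr p X x * pr p Y y := rfl
      rw [this, Real.logb_mul hx.ne' hy.ne']
      ring
  have hsumb : ∑ t : α × β, b t = 1 := by
    rw [Fintype.sum_prod_type (f := b)]
    have : ∀ x : α, (∑ y, b (x, y)) = pr p X x * ∑ y, pr p Y y := by
      intro x; rw [Finset.mul_sum]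
    rw [Finset.sum_congr rfl fun x _ => this x, ← Finset.sum_mul,
      sum_pr p X, sum_pr p Y, hp1, one_mul]
  have hsumq : ∑ t : α × β, q2 t = 1 := by rw [hq2, sum_pr p _, hp1]
  have total : ∑ t : α × β, (q2 t * Real.logb 2 (b t) - q2 t * Real.logb 2 (q2 t))
      ≤ 0 := by
    calc ∑ t : α × β, (q2 t * Real.logb 2 (b t) - q2 t * Real.logb 2 (q2 t))
        ≤ ∑ t : α × β, (b t - q2 t) / Real.log 2 :=
          Finset.sum_le_sum fun t _ => key t
      _ = (∑ t : α × β, b t - ∑ t : α × β, q2 t) / Real.log 2 := by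
          rw [← Finset.sum_div, Finset.sum_sub_distrib]
      _ ≤ 0 := by rw [hsumb, hsumq]; simp
  rw [Finset.sum_sub_distrib] at total
  rw [Finset.sum_congr rfl fun t _ => key2 t, Finset.sum_add_distrib] at total
  rw [sum2_weight_fst p X Y (fun x => Real.logb 2 (pr p X x))] at total
  rw [sum2_weight_snd p X Y (fun y => Real.logb 2 (pr p Y y))] at total
  have hxy : H p (fun ω => (X ω, Y ω)) = -∑ t, q2 t * Real.logb 2 (q2 t) :=
    H_eq_neg_sum p _
  have hx' : H p X = -∑ x, pr p X x * Real.logb 2 (pr p X x) := H_eq_neg_sum p X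
  have hy' : H p Y = -∑ y, pr p Y y * Real.logb 2 (pr p Y y) := H_eq_neg_sum p Y
  rw [hxy, hx', hy']
  linarith [total]

end Subadd


set_option maxHeartbeats 2000000 in
/-- Inner-bound auxiliary inequality II: if the joint pmf of `(A, C, E, U, V)` factorizes as
`p_{ACE} · p_{U|A} · p_{V|C}` and `H(C|A,V) = 0`, then
`I(A;V|U) − I(A;E|U) ≤ I(C;V) − H(C|A)`. -/
theorem inner_aux_ineq_II {𝒜 𝒞 ℰ 𝒰 𝒱 : Type}
    [Fintype 𝒜] [Fintype 𝒞] [Fintype ℰ] [Fintype 𝒰] [Fintype 𝒱]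
    (p : 𝒜 × 𝒞 × ℰ → ℝ) (hp : IsPMF p)
    (pU : 𝒜 → 𝒰 → ℝ) (hpU : IsKernel pU)
    (pV : 𝒞 → 𝒱 → ℝ) (hpV : IsKernel pV)
    (q : 𝒜 × 𝒞 × ℰ × 𝒰 × 𝒱 → ℝ)
    (hq : ∀ x, q x = p (x.1, x.2.1, x.2.2.1) * pU x.1 x.2.2.2.1 * pV x.2.1 x.2.2.2.2)
    (hCAV : Hc q (fun x => x.2.1) (fun x => (x.1, x.2.2.2.2)) = 0) :
    cMI q (fun x => x.1) (fun x => x.2.2.2.2) (fun x => x.2.2.2.1) -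
      cMI q (fun x => x.1) (fun x => x.2.2.1) (fun x => x.2.2.2.1) ≤
      MI q (fun x => x.2.1) (fun x => x.2.2.2.2) -
        Hc q (fun x => x.2.1) (fun x => x.1) := by
  classical
  obtain ⟨hpnn, hp1⟩ := hp
  have hqnn : ∀ ω, 0 ≤ q ω := by
    intro ω; rw [hq]
    exact mul_nonneg (mul_nonneg (hpnn _) ((hpU _).1 _)) ((hpV _).1 _)
  have innerV : ∀ a c e u, ∑ v, q (a, c, e, u, v) = p (a, c, e) * pU a u := by
    intro a c e u
    calc ∑ v, q (a, c, e, u, v) = ∑ v, p (a, c, e) * pU a u * pV c v := by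
          refine Finset.sum_congr rfl fun v _ => ?_; rw [hq]
      _ = p (a, c, e) * pU a u := by rw [← Finset.mul_sum, (hpV c).2, mul_one]
  have innerU : ∀ a c e v, ∑ u, q (a, c, e, u, v) = p (a, c, e) * pV c v := by
    intro a c e v
    calc ∑ u, q (a, c, e, u, v) = ∑ u, p (a, c, e) * pV c v * pU a u := by
          refine Finset.sum_congr rfl fun u _ => ?_; rw [hq]; dsimp only; ring
      _ = p (a, c, e) * pV c v := by rw [← Finset.mul_sum, (hpU a).2, mul_one]
  have innerUV : ∀ a c e, ∑ u, ∑ v, q (a, c, e, u, v) = p (a, c, e) := by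
    intro a c e
    rw [Finset.sum_congr rfl fun u _ => innerV a c e u, ← Finset.mul_sum,
      (hpU a).2, mul_one]
  have hq1 : ∑ ω, q ω = 1 := by
    calc ∑ ω, q ω = ∑ a, ∑ c, ∑ e, ∑ u, ∑ v, q (a, c, e, u, v) := by
          simp only [Fintype.sum_prod_type]
      _ = ∑ a, ∑ c, ∑ e, p (a, c, e) :=
          Finset.sum_congr rfl fun a _ => Finset.sum_congr rfl fun c _ =>
            Finset.sum_congr rfl fun e _ => innerUV a c e
      _ = 1 := by rw [← hp1]; simp only [Fintype.sum_prod_type]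
  -- marginals
  have m_A : ∀ a, pr q (fun x => x.1) a = ∑ c, ∑ e, p (a, c, e) := by
    intro a
    calc pr q (fun x => x.1) a
        = ∑ w : 𝒞 × ℰ × 𝒰 × 𝒱, pr q (fun x => (x.1, x.2)) (a, w) :=
          marg_snd q (fun x => x.1) (fun x => x.2) a
      _ = ∑ w : 𝒞 × ℰ × 𝒰 × 𝒱, q (a, w) :=
          Finset.sum_congr rfl fun w _ => pr_id q (a, w)
      _ = ∑ c, ∑ e, ∑ u, ∑ v, q (a, c, e, u, v) := by
          simp only [Fintype.sum_prod_type]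
      _ = ∑ c, ∑ e, p (a, c, e) :=
          Finset.sum_congr rfl fun c _ => Finset.sum_congr rfl fun e _ => innerUV a c e
  have hf_C : Function.Injective
      (fun t : 𝒜 × 𝒞 × ℰ × 𝒰 × 𝒱 => (t.2.1, (t.1, t.2.2.1, t.2.2.2.1, t.2.2.2.2))) := by
    intro s r h; simp only [Prod.mk.injEq] at h; simp only [Prod.ext_iff]; tauto
  have m_C : ∀ c, pr q (fun x => x.2.1) c = ∑ a, ∑ e, p (a, c, e) := by
    intro c
    calc pr q (fun x => x.2.1) c
        = ∑ w : 𝒜 × ℰ × 𝒰 × 𝒱, pr q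
            (fun x => (x.2.1, (x.1, x.2.2.1, x.2.2.2.1, x.2.2.2.2))) (c, w) :=
          marg_snd q (fun x => x.2.1)
            (fun x => (x.1, x.2.2.1, x.2.2.2.1, x.2.2.2.2)) c
      _ = ∑ w : 𝒜 × ℰ × 𝒰 × 𝒱, q (w.1, c, w.2.1, w.2.2.1, w.2.2.2) :=
          Finset.sum_congr rfl fun w _ =>
            (pr_comp_inj q (fun ω => ω) hf_C (w.1, c, w.2.1, w.2.2.1, w.2.2.2)).trans
              (pr_id q _)
      _ = ∑ a, ∑ e, ∑ u, ∑ v, q (a, c, e, u, v) := by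
          simp only [Fintype.sum_prod_type]
      _ = ∑ a, ∑ e, p (a, c, e) :=
          Finset.sum_congr rfl fun a _ => Finset.sum_congr rfl fun e _ => innerUV a c e
  have hf_AC : Function.Injective
      (fun t : 𝒜 × 𝒞 × ℰ × 𝒰 × 𝒱 => ((t.1, t.2.1), (t.2.2.1, t.2.2.2.1, t.2.2.2.2))) := by
    intro s r h; simp only [Prod.mk.injEq] at h; simp only [Prod.ext_iff]; tauto
  have m_AC : ∀ a c, pr q (fun x => (x.1, x.2.1)) (a, c) = ∑ e, p (a, c, e) := by
    intro a c
    calc pr q (fun x => (x.1, x.2.1)) (a, c)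
        = ∑ w : ℰ × 𝒰 × 𝒱, pr q
            (fun x => ((x.1, x.2.1), (x.2.2.1, x.2.2.2.1, x.2.2.2.2))) ((a, c), w) :=
          marg_snd q (fun x => (x.1, x.2.1))
            (fun x => (x.2.2.1, x.2.2.2.1, x.2.2.2.2)) (a, c)
      _ = ∑ w : ℰ × 𝒰 × 𝒱, q (a, c, w.1, w.2.1, w.2.2) :=
          Finset.sum_congr rfl fun w _ =>
            (pr_comp_inj q (fun ω => ω) hf_AC (a, c, w.1, w.2.1, w.2.2)).trans
              (pr_id q _)
      _ = ∑ e, ∑ u, ∑ v, q (a, c, e, u, v) := by simp only [Fintype.sum_prod_type]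
      _ = ∑ e, p (a, c, e) := Finset.sum_congr rfl fun e _ => innerUV a c e
  have hf_UA : Function.Injective
      (fun t : 𝒜 × 𝒞 × ℰ × 𝒰 × 𝒱 => ((t.2.2.2.1, t.1), (t.2.1, t.2.2.1, t.2.2.2.2))) := by
    intro s r h; simp only [Prod.mk.injEq] at h; simp only [Prod.ext_iff]; tauto
  have m_UA : ∀ u a, pr q (fun x => (x.2.2.2.1, x.1)) (u, a)
      = (∑ c, ∑ e, p (a, c, e)) * pU a u := by
    intro u a
    calc pr q (fun x => (x.2.2.2.1, x.1)) (u, a)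
        = ∑ w : 𝒞 × ℰ × 𝒱, pr q
            (fun x => ((x.2.2.2.1, x.1), (x.2.1, x.2.2.1, x.2.2.2.2))) ((u, a), w) :=
          marg_snd q (fun x => (x.2.2.2.1, x.1))
            (fun x => (x.2.1, x.2.2.1, x.2.2.2.2)) (u, a)
      _ = ∑ w : 𝒞 × ℰ × 𝒱, q (a, w.1, w.2.1, u, w.2.2) :=
          Finset.sum_congr rfl fun w _ =>
            (pr_comp_inj q (fun ω => ω) hf_UA (a, w.1, w.2.1, u, w.2.2)).trans
              (pr_id q _)
      _ = ∑ c, ∑ e, ∑ v, q (a, c, e, u, v) := by simp only [Fintype.sum_prod_type]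
      _ = ∑ c, ∑ e, p (a, c, e) * pU a u :=
          Finset.sum_congr rfl fun c _ => Finset.sum_congr rfl fun e _ => innerV a c e u
      _ = (∑ c, ∑ e, p (a, c, e)) * pU a u := by
          rw [Finset.sum_mul]
          exact Finset.sum_congr rfl fun c _ => (Finset.sum_mul _ _ _).symm
  have hf_VA : Function.Injective
      (fun t : 𝒜 × 𝒞 × ℰ × 𝒰 × 𝒱 => ((t.2.2.2.2, t.1), (t.2.1, t.2.2.1, t.2.2.2.1))) := by
    intro s r h; simp only [Prod.mk.injEq] at h; simp only [Prod.ext_iff]; tauto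
  have m_VA : ∀ v a, pr q (fun x => (x.2.2.2.2, x.1)) (v, a)
      = ∑ c, (∑ e, p (a, c, e)) * pV c v := by
    intro v a
    calc pr q (fun x => (x.2.2.2.2, x.1)) (v, a)
        = ∑ w : 𝒞 × ℰ × 𝒰, pr q
            (fun x => ((x.2.2.2.2, x.1), (x.2.1, x.2.2.1, x.2.2.2.1))) ((v, a), w) :=
          marg_snd q (fun x => (x.2.2.2.2, x.1))
            (fun x => (x.2.1, x.2.2.1, x.2.2.2.1)) (v, a)
      _ = ∑ w : 𝒞 × ℰ × 𝒰, q (a, w.1, w.2.1, w.2.2, v) :=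
          Finset.sum_congr rfl fun w _ =>
            (pr_comp_inj q (fun ω => ω) hf_VA (a, w.1, w.2.1, w.2.2, v)).trans
              (pr_id q _)
      _ = ∑ c, ∑ e, ∑ u, q (a, c, e, u, v) := by simp only [Fintype.sum_prod_type]
      _ = ∑ c, ∑ e, p (a, c, e) * pV c v :=
          Finset.sum_congr rfl fun c _ => Finset.sum_congr rfl fun e _ => innerU a c e v
      _ = ∑ c, (∑ e, p (a, c, e)) * pV c v :=
          Finset.sum_congr rfl fun c _ => (Finset.sum_mul _ _ _).symm
  have hf_UVA : Function.Injective
      (fun t : 𝒜 × 𝒞 × ℰ × 𝒰 × 𝒱 =>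
        ((t.2.2.2.1, t.2.2.2.2, t.1), (t.2.1, t.2.2.1))) := by
    intro s r h; simp only [Prod.mk.injEq] at h; simp only [Prod.ext_iff]; tauto
  have m_UVA : ∀ u v a, pr q (fun x => (x.2.2.2.1, x.2.2.2.2, x.1)) (u, v, a)
      = pU a u * ∑ c, (∑ e, p (a, c, e)) * pV c v := by
    intro u v a
    calc pr q (fun x => (x.2.2.2.1, x.2.2.2.2, x.1)) (u, v, a)
        = ∑ w : 𝒞 × ℰ, pr q
            (fun x => ((x.2.2.2.1, x.2.2.2.2, x.1), (x.2.1, x.2.2.1))) ((u, v, a), w) :=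
          marg_snd q (fun x => (x.2.2.2.1, x.2.2.2.2, x.1))
            (fun x => (x.2.1, x.2.2.1)) (u, v, a)
      _ = ∑ w : 𝒞 × ℰ, q (a, w.1, w.2, u, v) :=
          Finset.sum_congr rfl fun w _ =>
            (pr_comp_inj q (fun ω => ω) hf_UVA (a, w.1, w.2, u, v)).trans (pr_id q _)
      _ = ∑ c, ∑ e, q (a, c, e, u, v) := by simp only [Fintype.sum_prod_type]
      _ = ∑ c, ∑ e, pU a u * (p (a, c, e) * pV c v) := by
          refine Finset.sum_congr rfl fun c _ => Finset.sum_congr rfl fun e _ => ?_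
          rw [hq]; dsimp only; ring
      _ = pU a u * ∑ c, ∑ e, p (a, c, e) * pV c v := by
          rw [Finset.mul_sum]
          exact Finset.sum_congr rfl fun c _ => (Finset.mul_sum _ _ _).symm
      _ = pU a u * ∑ c, (∑ e, p (a, c, e)) * pV c v := by
          congr 1
          exact Finset.sum_congr rfl fun c _ => (Finset.sum_mul _ _ _).symm
  have hf_AVC : Function.Injective
      (fun t : 𝒜 × 𝒞 × ℰ × 𝒰 × 𝒱 =>
        ((t.1, t.2.2.2.2, t.2.1), (t.2.2.1, t.2.2.2.1))) := by
    intro s r h; simp only [Prod.mk.injEq] at h; simp only [Prod.ext_iff]; tauto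
  have m_AVC : ∀ a v c, pr q (fun x => (x.1, x.2.2.2.2, x.2.1)) (a, v, c)
      = (∑ e, p (a, c, e)) * pV c v := by
    intro a v c
    calc pr q (fun x => (x.1, x.2.2.2.2, x.2.1)) (a, v, c)
        = ∑ w : ℰ × 𝒰, pr q
            (fun x => ((x.1, x.2.2.2.2, x.2.1), (x.2.2.1, x.2.2.2.1))) ((a, v, c), w) :=
          marg_snd q (fun x => (x.1, x.2.2.2.2, x.2.1))
            (fun x => (x.2.2.1, x.2.2.2.1)) (a, v, c)
      _ = ∑ w : ℰ × 𝒰, q (a, c, w.1, w.2, v) :=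
          Finset.sum_congr rfl fun w _ =>
            (pr_comp_inj q (fun ω => ω) hf_AVC (a, c, w.1, w.2, v)).trans (pr_id q _)
      _ = ∑ e, ∑ u, q (a, c, e, u, v) := by simp only [Fintype.sum_prod_type]
      _ = ∑ e, p (a, c, e) * pV c v :=
          Finset.sum_congr rfl fun e _ => innerU a c e v
      _ = (∑ e, p (a, c, e)) * pV c v := (Finset.sum_mul _ _ _).symm
  have hf_VC : Function.Injective
      (fun t : 𝒜 × 𝒞 × ℰ × 𝒰 × 𝒱 =>
        ((t.2.2.2.2, t.2.1), (t.1, t.2.2.1, t.2.2.2.1))) := by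
    intro s r h; simp only [Prod.mk.injEq] at h; simp only [Prod.ext_iff]; tauto
  have m_VC : ∀ v c, pr q (fun x => (x.2.2.2.2, x.2.1)) (v, c)
      = (∑ a, ∑ e, p (a, c, e)) * pV c v := by
    intro v c
    calc pr q (fun x => (x.2.2.2.2, x.2.1)) (v, c)
        = ∑ w : 𝒜 × ℰ × 𝒰, pr q
            (fun x => ((x.2.2.2.2, x.2.1), (x.1, x.2.2.1, x.2.2.2.1))) ((v, c), w) :=
          marg_snd q (fun x => (x.2.2.2.2, x.2.1))
            (fun x => (x.1, x.2.2.1, x.2.2.2.1)) (v, c)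
      _ = ∑ w : 𝒜 × ℰ × 𝒰, q (w.1, c, w.2.1, w.2.2, v) :=
          Finset.sum_congr rfl fun w _ =>
            (pr_comp_inj q (fun ω => ω) hf_VC (w.1, c, w.2.1, w.2.2, v)).trans
              (pr_id q _)
      _ = ∑ a, ∑ e, ∑ u, q (a, c, e, u, v) := by simp only [Fintype.sum_prod_type]
      _ = ∑ a, ∑ e, p (a, c, e) * pV c v :=
          Finset.sum_congr rfl fun a _ => Finset.sum_congr rfl fun e _ => innerU a c e v
      _ = (∑ a, ∑ e, p (a, c, e)) * pV c v := by
          rw [Finset.sum_mul]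
          exact Finset.sum_congr rfl fun a _ => (Finset.sum_mul _ _ _).symm
  -- Markov conditions
  have hM1 : ∀ u v a,
      pr q (fun x => (x.2.2.2.1, x.2.2.2.2, x.1)) (u, v, a) * pr q (fun x => x.1) a
        = pr q (fun x => (x.2.2.2.1, x.1)) (u, a)
          * pr q (fun x => (x.2.2.2.2, x.1)) (v, a) := by
    intro u v a
    rw [m_UVA, m_A, m_UA, m_VA]; ring
  have hM2 : ∀ a v c,
      pr q (fun x => (x.1, x.2.2.2.2, x.2.1)) (a, v, c) * pr q (fun x => x.2.1) c
        = pr q (fun x => (x.1, x.2.1)) (a, c)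
          * pr q (fun x => (x.2.2.2.2, x.2.1)) (v, c) := by
    intro a v c
    rw [m_AVC, m_C, m_AC, m_VC]; ring
  -- entropy facts
  have F1 : H q (fun x => (x.1, x.2.2.1, x.2.2.2.1)) + H q (fun x => x.2.2.2.1)
      ≤ H q (fun x => (x.1, x.2.2.2.1)) + H q (fun x => (x.2.2.1, x.2.2.2.1)) :=
    submod q (fun x => x.1) (fun x => x.2.2.1) (fun x => x.2.2.2.1) hqnn
  have F2 : H q (fun x => (x.2.2.2.1, x.2.2.2.2, x.1)) + H q (fun x => x.1)
      = H q (fun x => (x.2.2.2.1, x.1)) + H q (fun x => (x.2.2.2.2, x.1)) :=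
    condIndep_H q (fun x => x.2.2.2.1) (fun x => x.2.2.2.2) (fun x => x.1) hqnn hM1
  have F3 : H q (fun x => (x.1, x.2.2.2.2, x.2.1)) + H q (fun x => x.2.1)
      = H q (fun x => (x.1, x.2.1)) + H q (fun x => (x.2.2.2.2, x.2.1)) :=
    condIndep_H q (fun x => x.1) (fun x => x.2.2.2.2) (fun x => x.2.1) hqnn hM2
  have F4 : H q (fun x => (x.2.2.2.2, x.2.2.2.1))
      ≤ H q (fun x => x.2.2.2.2) + H q (fun x => x.2.2.2.1) :=
    subadd q (fun x => x.2.2.2.2) (fun x => x.2.2.2.1) hqnn hq1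
  -- relabelings
  have hfR1 : Function.Injective (fun t : 𝒰 × 𝒱 × 𝒜 => (t.2.2, (t.2.1, t.1))) := by
    intro s r h; simp only [Prod.mk.injEq] at h; simp only [Prod.ext_iff]; tauto
  have R1 : H q (fun x => (x.1, x.2.2.2.2, x.2.2.2.1))
      = H q (fun x => (x.2.2.2.1, x.2.2.2.2, x.1)) :=
    H_comp_inj q (fun x => (x.2.2.2.1, x.2.2.2.2, x.1)) hfR1
  have hfR2 : Function.Injective (fun t : 𝒜 × 𝒰 => (t.2, t.1)) := by
    intro s r h; simp only [Prod.mk.injEq] at h; simp only [Prod.ext_iff]; tauto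
  have R2 : H q (fun x => (x.2.2.2.1, x.1)) = H q (fun x => (x.1, x.2.2.2.1)) :=
    H_comp_inj q (fun x => (x.1, x.2.2.2.1)) hfR2
  have hfR3 : Function.Injective (fun t : 𝒜 × 𝒱 => (t.2, t.1)) := by
    intro s r h; simp only [Prod.mk.injEq] at h; simp only [Prod.ext_iff]; tauto
  have R3 : H q (fun x => (x.2.2.2.2, x.1)) = H q (fun x => (x.1, x.2.2.2.2)) :=
    H_comp_inj q (fun x => (x.1, x.2.2.2.2)) hfR3
  have hfR4 : Function.Injective (fun t : 𝒜 × 𝒱 × 𝒞 => (t.2.2, t.1, t.2.1)) := by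
    intro s r h; simp only [Prod.mk.injEq] at h; simp only [Prod.ext_iff]; tauto
  have R4 : H q (fun x => (x.2.1, x.1, x.2.2.2.2))
      = H q (fun x => (x.1, x.2.2.2.2, x.2.1)) :=
    H_comp_inj q (fun x => (x.1, x.2.2.2.2, x.2.1)) hfR4
  have hfR5 : Function.Injective (fun t : 𝒜 × 𝒞 => (t.2, t.1)) := by
    intro s r h; simp only [Prod.mk.injEq] at h; simp only [Prod.ext_iff]; tauto
  have R5 : H q (fun x => (x.2.1, x.1)) = H q (fun x => (x.1, x.2.1)) :=
    H_comp_inj q (fun x => (x.1, x.2.1)) hfR5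
  have hfR6 : Function.Injective (fun t : 𝒱 × 𝒞 => (t.2, t.1)) := by
    intro s r h; simp only [Prod.mk.injEq] at h; simp only [Prod.ext_iff]; tauto
  have R6 : H q (fun x => (x.2.1, x.2.2.2.2)) = H q (fun x => (x.2.2.2.2, x.2.1)) :=
    H_comp_inj q (fun x => (x.2.2.2.2, x.2.1)) hfR6
  simp only [Hc] at hCAV
  simp only [cMI, Hc, MI]
  linarith [F1, F2, F3, F4, R1, R2, R3, R4, R5, R6, hCAV]
end
end

section
/- (Equivocation converse single-letterization.) Let (A_i, C_i, E_i), i = 1,…,N, be i.i.d. finite-valued triples with pmf p_{ACE}, let J = f_A(A^N) and K = f_C(C^N) be arbitrary functions of the blocks A^N and C^N respectively, and define U_i = (J, A^{i−1}, E^{i−1}) and V_i = (K, C^{i−1}). Then H(A^N | J, E^N) ≤ H(A^N | J, K) + Σ_{i=1}^N [ I(A_i; V_i | U_i) − I(A_i; E_i | U_i) ]. -/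
open scoped BigOperators

noncomputable section

open SSW

section EquivocationAux

open SSW

variable {Ω α β γ δ : Type*} [Fintype Ω]

private lemma EC_pr_nonneg (p : Ω → ℝ) (hp : ∀ ω, 0 ≤ p ω) (X : Ω → α) (x : α) :
    0 ≤ pr p X x :=
  Finset.sum_nonneg fun ω _ => by by_cases h : X ω = x <;> simp [h, hp ω]

private lemma EC_sum_pr [Fintype α] (p : Ω → ℝ) (X : Ω → α) : ∑ x, pr p X x = ∑ ω, p ω := by
  unfold pr; rw [Finset.sum_comm]
  refine Finset.sum_congr rfl fun ω _ => ?_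
  rw [Finset.sum_eq_single (X ω)]
  · simp
  · intro b _ hb; rw [if_neg (fun h => hb h.symm)]
  · intro hb; exact absurd (Finset.mem_univ _) hb

private lemma EC_pr_zero_of_not_range [Fintype α] (p : Ω → ℝ) (X : Ω → α) (e : α → β) (y : β)
    (hy : y ∉ Set.range (fun ω => e (X ω))) : pr p (fun ω => e (X ω)) y = 0 := by
  refine Finset.sum_eq_zero fun ω _ => ?_
  rw [if_neg]; exact fun h => hy ⟨ω, h⟩

private lemma EC_pr_comp_inj (p : Ω → ℝ) (X : Ω → α) (e : α → β) (he : Function.Injective e)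
    (x : α) : pr p (fun ω => e (X ω)) (e x) = pr p X x := by
  refine Finset.sum_congr rfl fun ω _ => ?_
  by_cases h : X ω = x
  · rw [if_pos h, if_pos (congrArg e h)]
  · rw [if_neg h, if_neg (fun hc => h (he hc))]

private lemma EC_H_comp_inj [Fintype α] [Fintype β] (p : Ω → ℝ) (X : Ω → α) (e : α → β)
    (he : Function.Injective e) : H p (fun ω => e (X ω)) = H p X := by
  classical
  unfold H
  rw [← Finset.sum_subset (Finset.subset_univ (Finset.image e Finset.univ))
    (fun y _ hy => by
      rw [EC_pr_zero_of_not_range p X e y (by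
        intro ⟨ω, hω⟩
        exact hy (Finset.mem_image.2 ⟨X ω, Finset.mem_univ _, hω⟩))]
      simp)]
  rw [Finset.sum_image (fun a _ b _ hab => he hab)]
  refine Finset.sum_congr rfl fun x _ => ?_
  rw [EC_pr_comp_inj p X e he]

private lemma EC_H_eq [Fintype α] [Fintype β] (p : Ω → ℝ) (X : Ω → α) (Y : Ω → β)
    (g : α → β) (h : β → α) (hg : ∀ ω, Y ω = g (X ω)) (hh : ∀ ω, X ω = h (Y ω)) :
    H p X = H p Y := by
  have e1 : H p (fun ω => (X ω, Y ω)) = H p X := by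
    have hfun : (fun ω => (X ω, Y ω)) = fun ω => ((fun a => (a, g a)) (X ω)) := by
      funext ω; simp only [hg ω]
    rw [hfun]
    exact EC_H_comp_inj p X (fun a => (a, g a))
      (fun a b hab => by simpa using congrArg Prod.fst hab)
  have e2 : H p (fun ω => (X ω, Y ω)) = H p Y := by
    have hfun : (fun ω => (X ω, Y ω)) = fun ω => ((fun b => (h b, b)) (Y ω)) := by
      funext ω; rw [hh ω]
    rw [hfun]
    exact EC_H_comp_inj p Y (fun b => (h b, b))
      (fun a b hab => by simpa using congrArg Prod.snd hab)
  rw [← e1, e2]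

private lemma EC_Hc_congr [Fintype α] [Fintype γ] [Fintype δ] (p : Ω → ℝ) (X : Ω → α)
    (Z : Ω → γ) (Z' : Ω → δ) (g : γ → δ) (h : δ → γ)
    (hg : ∀ ω, Z' ω = g (Z ω)) (hh : ∀ ω, Z ω = h (Z' ω)) :
    Hc p X Z = Hc p X Z' := by
  unfold Hc
  rw [EC_H_eq p Z Z' g h hg hh,
    EC_H_eq p (fun ω => (X ω, Z ω)) (fun ω => (X ω, Z' ω))
      (fun ac => (ac.1, g ac.2)) (fun ad => (ad.1, h ad.2))
      (fun ω => by simp [hg ω]) (fun ω => by simp [← hh ω])]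

private lemma EC_gibbs_term (a b c d : ℝ) (ha : 0 ≤ a) (hab : a ≤ b) (hac : a ≤ c)
    (hbd : b ≤ d) :
    a * Real.logb 2 b + a * Real.logb 2 c - a * Real.logb 2 a - a * Real.logb 2 d
      ≤ (b * c / d - a) / Real.log 2 := by
  have hlog2 : 0 < Real.log 2 := Real.log_pos (by norm_num)
  rcases eq_or_lt_of_le ha with h0 | hpos
  · rw [← h0]
    have hb : 0 ≤ b := h0 ▸ hab
    have hc : 0 ≤ c := h0 ▸ hac
    have hd : 0 ≤ d := le_trans hb hbd
    simp only [zero_mul, add_zero, sub_zero, zero_add, sub_zero]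
    positivity
  · have hb : 0 < b := lt_of_lt_of_le hpos hab
    have hc : 0 < c := lt_of_lt_of_le hpos hac
    have hd : 0 < d := lt_of_lt_of_le hb hbd
    have key : Real.log (b * c / (a * d)) ≤ b * c / (a * d) - 1 :=
      Real.log_le_sub_one_of_pos (by positivity)
    have hexp : Real.log (b * c / (a * d)) =
        Real.log b + Real.log c - Real.log a - Real.log d := by
      rw [Real.log_div (by positivity) (by positivity), Real.log_mul hb.ne' hc.ne',
        Real.log_mul hpos.ne' hd.ne']
      ring
    have h2 : a * (Real.log b + Real.log c - Real.log a - Real.log d) ≤ b * c / d - a := by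
      have h3 := mul_le_mul_of_nonneg_left key (le_of_lt hpos)
      rw [hexp] at h3
      have e1 : a * (b * c / (a * d) - 1) = b * c / d - a := by
        field_simp
      linarith [e1 ▸ h3]
    rw [Real.logb, Real.logb, Real.logb, Real.logb]
    calc a * (Real.log b / Real.log 2) + a * (Real.log c / Real.log 2)
          - a * (Real.log a / Real.log 2) - a * (Real.log d / Real.log 2)
        = (a * (Real.log b + Real.log c - Real.log a - Real.log d)) / Real.log 2 := by
          ring
      _ ≤ (b * c / d - a) / Real.log 2 := by gcongr

private lemma EC_sum_comm₃ {α β γ : Type*} [Fintype α] [Fintype β] [Fintype γ]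
    (f : α → β → γ → ℝ) :
    ∑ x, ∑ y, ∑ z, f x y z = ∑ z, ∑ x, ∑ y, f x y z := by
  calc ∑ x, ∑ y, ∑ z, f x y z = ∑ x, ∑ z, ∑ y, f x y z :=
        Finset.sum_congr rfl fun x _ => Finset.sum_comm
    _ = ∑ z, ∑ x, ∑ y, f x y z := Finset.sum_comm

private lemma EC_gibbs_sum {α β γ : Type*} [Fintype α] [Fintype β] [Fintype γ]
    (q : α → β → γ → ℝ) (hq0 : ∀ x y z, 0 ≤ q x y z)
    (hsum : ∑ x, ∑ y, ∑ z, q x y z = 1) :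
    (∑ x, ∑ y, ∑ z, -(q x y z * Real.logb 2 (q x y z)))
      + (∑ z, -((∑ x, ∑ y, q x y z) * Real.logb 2 (∑ x, ∑ y, q x y z)))
      ≤ (∑ x, ∑ z, -((∑ y, q x y z) * Real.logb 2 (∑ y, q x y z)))
      + (∑ y, ∑ z, -((∑ x, q x y z) * Real.logb 2 (∑ x, q x y z))) := by
  classical
  have hlog2 : 0 < Real.log 2 := Real.log_pos (by norm_num)
  set L : ℝ → ℝ := Real.logb 2 with hL
  set pxz : α → γ → ℝ := fun x z => ∑ y, q x y z with hpxz
  set pyz : β → γ → ℝ := fun y z => ∑ x, q x y z with hpyz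
  set pz : γ → ℝ := fun z => ∑ x, ∑ y, q x y z with hpz
  have hpxz0 : ∀ x z, 0 ≤ pxz x z := fun x z => Finset.sum_nonneg fun y _ => hq0 x y z
  have hpz0 : ∀ z, 0 ≤ pz z := fun z =>
    Finset.sum_nonneg fun x _ => Finset.sum_nonneg fun y _ => hq0 x y z
  have hqb : ∀ x y z, q x y z ≤ pxz x z := fun x y z =>
    Finset.single_le_sum (fun y' _ => hq0 x y' z) (Finset.mem_univ y)
  have hqc : ∀ x y z, q x y z ≤ pyz y z := fun x y z =>
    Finset.single_le_sum (fun x' _ => hq0 x' y z) (Finset.mem_univ x)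
  have hbd : ∀ x z, pxz x z ≤ pz z := fun x z =>
    Finset.single_le_sum (f := fun x' => pxz x' z) (fun x' _ => hpxz0 x' z) (Finset.mem_univ x)
  have hpyz_sum : ∀ z, ∑ y, pyz y z = pz z := fun z => Finset.sum_comm
  have hz1 : ∀ z, (∑ x, ∑ y, pxz x z * pyz y z / pz z) = pz z * pz z / pz z := by
    intro z
    have inner : ∀ x, (∑ y, pxz x z * pyz y z / pz z) = pxz x z * pz z / pz z := by
      intro x
      rw [← Finset.sum_div, ← Finset.mul_sum, hpyz_sum z]
    rw [Finset.sum_congr rfl fun x _ => inner x, ← Finset.sum_div, ← Finset.sum_mul]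
  have hr : (∑ x, ∑ y, ∑ z, pxz x z * pyz y z / pz z) ≤ 1 := by
    rw [EC_sum_comm₃]
    calc ∑ z, ∑ x, ∑ y, pxz x z * pyz y z / pz z = ∑ z, pz z * pz z / pz z :=
          Finset.sum_congr rfl fun z _ => hz1 z
      _ ≤ ∑ z, pz z := by
          refine Finset.sum_le_sum fun z _ => ?_
          rcases eq_or_ne (pz z) 0 with h | h
          · rw [h]; simp
          · rw [mul_div_assoc, div_self h, mul_one]
      _ = 1 := by
          have h5 : (∑ z, pz z) = ∑ x, ∑ y, ∑ z, q x y z := (EC_sum_comm₃ q).symm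
          rw [h5, hsum]
  have hterm : ∀ x y z,
      q x y z * L (pxz x z) + q x y z * L (pyz y z) - q x y z * L (q x y z)
        - q x y z * L (pz z) ≤ (pxz x z * pyz y z / pz z - q x y z) / Real.log 2 :=
    fun x y z => EC_gibbs_term (q x y z) (pxz x z) (pyz y z) (pz z)
      (hq0 x y z) (hqb x y z) (hqc x y z) (hbd x z)
  have main : ∑ x, ∑ y, ∑ z, (q x y z * L (pxz x z) + q x y z * L (pyz y z)
      - q x y z * L (q x y z) - q x y z * L (pz z)) ≤ 0 := by
    calc ∑ x, ∑ y, ∑ z, (q x y z * L (pxz x z) + q x y z * L (pyz y z)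
          - q x y z * L (q x y z) - q x y z * L (pz z))
        ≤ ∑ x, ∑ y, ∑ z, (pxz x z * pyz y z / pz z - q x y z) / Real.log 2 := by
          refine Finset.sum_le_sum fun x _ => Finset.sum_le_sum fun y _ =>
            Finset.sum_le_sum fun z _ => hterm x y z
      _ = ((∑ x, ∑ y, ∑ z, pxz x z * pyz y z / pz z) - ∑ x, ∑ y, ∑ z, q x y z)
            / Real.log 2 := by
          simp only [← Finset.sum_div, Finset.sum_sub_distrib]
      _ ≤ 0 := by
          apply div_nonpos_of_nonpos_of_nonneg
          · linarith [hr]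
          · exact hlog2.le
  have E3 : (∑ x, ∑ z, -(pxz x z * L (pxz x z)))
      = ∑ x, ∑ y, ∑ z, -(q x y z * L (pxz x z)) := by
    refine Finset.sum_congr rfl fun x _ => ?_
    rw [Finset.sum_comm]
    refine Finset.sum_congr rfl fun z _ => ?_
    rw [hpxz]
    dsimp only
    rw [Finset.sum_mul, ← Finset.sum_neg_distrib]
  have E2 : (∑ y, ∑ z, -(pyz y z * L (pyz y z)))
      = ∑ x, ∑ y, ∑ z, -(q x y z * L (pyz y z)) := by
    rw [show (∑ x, ∑ y, ∑ z, -(q x y z * L (pyz y z)))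
        = ∑ y, ∑ x, ∑ z, -(q x y z * L (pyz y z)) from Finset.sum_comm]
    refine Finset.sum_congr rfl fun y _ => ?_
    rw [Finset.sum_comm]
    refine Finset.sum_congr rfl fun z _ => ?_
    rw [hpyz]
    dsimp only
    rw [Finset.sum_mul, ← Finset.sum_neg_distrib]
  have E4 : (∑ z, -(pz z * L (pz z)))
      = ∑ x, ∑ y, ∑ z, -(q x y z * L (pz z)) := by
    rw [EC_sum_comm₃]
    refine Finset.sum_congr rfl fun z _ => ?_
    rw [hpz]
    dsimp only
    rw [Finset.sum_mul, ← Finset.sum_neg_distrib]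
    refine Finset.sum_congr rfl fun x _ => ?_
    rw [Finset.sum_mul, ← Finset.sum_neg_distrib]
  rw [E2, E3, E4]
  have expand : ∀ f g : α → β → γ → ℝ,
      (∑ x, ∑ y, ∑ z, (f x y z + g x y z)) = (∑ x, ∑ y, ∑ z, f x y z)
        + (∑ x, ∑ y, ∑ z, g x y z) := by
    intro f g; simp only [Finset.sum_add_distrib]
  have expand2 : ∀ f g : α → β → γ → ℝ,
      (∑ x, ∑ y, ∑ z, (f x y z - g x y z)) = (∑ x, ∑ y, ∑ z, f x y z)
        - (∑ x, ∑ y, ∑ z, g x y z) := by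
    intro f g; simp only [Finset.sum_sub_distrib]
  rw [expand2, expand2, expand] at main
  have negved : ∀ f : α → β → γ → ℝ,
      (∑ x, ∑ y, ∑ z, -(f x y z)) = -(∑ x, ∑ y, ∑ z, f x y z) := by
    intro f; simp only [Finset.sum_neg_distrib]
  rw [negved, negved, negved, negved]
  linarith [main]

private lemma EC_pr_marg_mid [Fintype β] (p : Ω → ℝ) (X : Ω → α) (Y : Ω → β) (Z : Ω → γ)
    (x : α) (z : γ) :
    pr p (fun ω => (X ω, Z ω)) (x, z) = ∑ y, pr p (fun ω => (X ω, Y ω, Z ω)) (x, y, z) := by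
  unfold pr; rw [Finset.sum_comm]
  refine Finset.sum_congr rfl fun ω _ => ?_
  by_cases h1 : X ω = x
  · by_cases h2 : Z ω = z
    · subst h1; subst h2
      rw [if_pos rfl, Finset.sum_eq_single (Y ω)]
      · rw [if_pos rfl]
      · intro b _ hb
        rw [if_neg (fun hc => hb (congrArg (fun t => t.2.1) hc).symm)]
      · intro hb; exact absurd (Finset.mem_univ _) hb
    · rw [if_neg (fun hc => h2 (congrArg Prod.snd hc))]
      refine (Finset.sum_eq_zero fun y _ => ?_).symm
      rw [if_neg (fun hc => h2 (congrArg (fun t => t.2.2) hc))]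
  · rw [if_neg (fun hc => h1 (congrArg Prod.fst hc))]
    refine (Finset.sum_eq_zero fun y _ => ?_).symm
    rw [if_neg (fun hc => h1 (congrArg (fun t => t.1) hc))]

private lemma EC_pr_marg_fst [Fintype α] (p : Ω → ℝ) (X : Ω → α) (Y : Ω → β) (Z : Ω → γ)
    (y : β) (z : γ) :
    pr p (fun ω => (Y ω, Z ω)) (y, z) = ∑ x, pr p (fun ω => (X ω, Y ω, Z ω)) (x, y, z) := by
  unfold pr; rw [Finset.sum_comm]
  refine Finset.sum_congr rfl fun ω _ => ?_
  by_cases h1 : Y ω = y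
  · by_cases h2 : Z ω = z
    · subst h1; subst h2
      rw [if_pos rfl, Finset.sum_eq_single (X ω)]
      · rw [if_pos rfl]
      · intro b _ hb
        rw [if_neg (fun hc => hb (congrArg (fun t => t.1) hc).symm)]
      · intro hb; exact absurd (Finset.mem_univ _) hb
    · rw [if_neg (fun hc => h2 (congrArg Prod.snd hc))]
      refine (Finset.sum_eq_zero fun x' _ => ?_).symm
      rw [if_neg (fun hc => h2 (congrArg (fun t => t.2.2) hc))]
  · rw [if_neg (fun hc => h1 (congrArg Prod.fst hc))]
    refine (Finset.sum_eq_zero fun x' _ => ?_).symm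
    rw [if_neg (fun hc => h1 (congrArg (fun t => t.2.1) hc))]

private lemma EC_pr_pair_marg_fst [Fintype α] (p : Ω → ℝ) (X : Ω → α) (Z : Ω → γ) (z : γ) :
    pr p Z z = ∑ x, pr p (fun ω => (X ω, Z ω)) (x, z) := by
  unfold pr; rw [Finset.sum_comm]
  refine Finset.sum_congr rfl fun ω _ => ?_
  by_cases h1 : Z ω = z
  · subst h1
    rw [if_pos rfl, Finset.sum_eq_single (X ω)]
    · rw [if_pos rfl]
    · intro b _ hb
      rw [if_neg (fun hc => hb (congrArg (fun t => t.1) hc).symm)]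
    · intro hb; exact absurd (Finset.mem_univ _) hb
  · rw [if_neg h1]
    refine (Finset.sum_eq_zero fun x' _ => ?_).symm
    rw [if_neg (fun hc => h1 (congrArg (fun t => t.2) hc))]

private lemma EC_pr_marg_two [Fintype α] [Fintype β] (p : Ω → ℝ) (X : Ω → α) (Y : Ω → β)
    (Z : Ω → γ) (z : γ) :
    pr p Z z = ∑ x, ∑ y, pr p (fun ω => (X ω, Y ω, Z ω)) (x, y, z) := by
  rw [EC_pr_pair_marg_fst p X Z z]
  exact Finset.sum_congr rfl fun x _ => EC_pr_marg_mid p X Y Z x z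

private lemma EC_Hc_pair_le [Fintype α] [Fintype β] [Fintype γ]
    (p : Ω → ℝ) (hp : IsPMF p) (X : Ω → α) (Y : Ω → β) (Z : Ω → γ) :
    Hc p X (fun ω => (Y ω, Z ω)) ≤ Hc p X Z := by
  classical
  have hq0 : ∀ x y z, 0 ≤ pr p (fun ω => (X ω, Y ω, Z ω)) (x, y, z) :=
    fun x y z => EC_pr_nonneg p hp.1 _ _
  have hsum : ∑ x, ∑ y, ∑ z, pr p (fun ω => (X ω, Y ω, Z ω)) (x, y, z) = 1 := by
    have h1 := EC_sum_pr p (fun ω => (X ω, Y ω, Z ω))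
    rw [hp.2] at h1
    calc ∑ x, ∑ y, ∑ z, pr p (fun ω => (X ω, Y ω, Z ω)) (x, y, z)
        = ∑ t : α × β × γ, pr p (fun ω => (X ω, Y ω, Z ω)) t := by
          rw [Fintype.sum_prod_type]
          exact Finset.sum_congr rfl fun x _ => by rw [Fintype.sum_prod_type]
      _ = 1 := h1
  have e1 : H p (fun ω => (X ω, Y ω, Z ω))
      = ∑ x, ∑ y, ∑ z, -(pr p (fun ω => (X ω, Y ω, Z ω)) (x, y, z)
          * Real.logb 2 (pr p (fun ω => (X ω, Y ω, Z ω)) (x, y, z))) := by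
    unfold H
    rw [Fintype.sum_prod_type]
    exact Finset.sum_congr rfl fun x _ => by rw [Fintype.sum_prod_type]
  have e2 : H p (fun ω => (Y ω, Z ω))
      = ∑ y, ∑ z, -((∑ x, pr p (fun ω => (X ω, Y ω, Z ω)) (x, y, z))
          * Real.logb 2 (∑ x, pr p (fun ω => (X ω, Y ω, Z ω)) (x, y, z))) := by
    unfold H
    rw [Fintype.sum_prod_type]
    refine Finset.sum_congr rfl fun y _ => Finset.sum_congr rfl fun z _ => ?_
    rw [EC_pr_marg_fst p X Y Z y z]
  have e3 : H p (fun ω => (X ω, Z ω))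
      = ∑ x, ∑ z, -((∑ y, pr p (fun ω => (X ω, Y ω, Z ω)) (x, y, z))
          * Real.logb 2 (∑ y, pr p (fun ω => (X ω, Y ω, Z ω)) (x, y, z))) := by
    unfold H
    rw [Fintype.sum_prod_type]
    refine Finset.sum_congr rfl fun x _ => Finset.sum_congr rfl fun z _ => ?_
    rw [EC_pr_marg_mid p X Y Z x z]
  have e4 : H p Z
      = ∑ z, -((∑ x, ∑ y, pr p (fun ω => (X ω, Y ω, Z ω)) (x, y, z))
          * Real.logb 2 (∑ x, ∑ y, pr p (fun ω => (X ω, Y ω, Z ω)) (x, y, z))) := by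
    unfold H
    refine Finset.sum_congr rfl fun z _ => ?_
    rw [EC_pr_marg_two p X Y Z z]
  have G : (∑ x, ∑ y, ∑ z, -(pr p (fun ω => (X ω, Y ω, Z ω)) (x, y, z)
          * Real.logb 2 (pr p (fun ω => (X ω, Y ω, Z ω)) (x, y, z))))
      + (∑ z, -((∑ x, ∑ y, pr p (fun ω => (X ω, Y ω, Z ω)) (x, y, z))
          * Real.logb 2 (∑ x, ∑ y, pr p (fun ω => (X ω, Y ω, Z ω)) (x, y, z))))
      ≤ (∑ x, ∑ z, -((∑ y, pr p (fun ω => (X ω, Y ω, Z ω)) (x, y, z))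
          * Real.logb 2 (∑ y, pr p (fun ω => (X ω, Y ω, Z ω)) (x, y, z))))
      + (∑ y, ∑ z, -((∑ x, pr p (fun ω => (X ω, Y ω, Z ω)) (x, y, z))
          * Real.logb 2 (∑ x, pr p (fun ω => (X ω, Y ω, Z ω)) (x, y, z)))) :=
    EC_gibbs_sum (fun x y z => pr p (fun ω => (X ω, Y ω, Z ω)) (x, y, z)) hq0 hsum
  have goal' : H p (fun ω => (X ω, Y ω, Z ω)) - H p (fun ω => (Y ω, Z ω))
      ≤ H p (fun ω => (X ω, Z ω)) - H p Z := by
    rw [e1, e2, e3, e4]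
    linarith [G]
  exact goal'

private lemma EC_Hc_le_comp [Fintype α] [Fintype γ] [Fintype δ]
    (p : Ω → ℝ) (hp : IsPMF p) (X : Ω → α) (Z : Ω → γ) (g : γ → δ) :
    Hc p X Z ≤ Hc p X (fun ω => g (Z ω)) := by
  have h1 : Hc p X Z = Hc p X (fun ω => (Z ω, g (Z ω))) :=
    EC_Hc_congr p X Z (fun ω => (Z ω, g (Z ω))) (fun c => (c, g c)) (fun t => t.1)
      (fun ω => rfl) (fun ω => rfl)
  rw [h1]
  exact EC_Hc_pair_le p hp X Z (fun ω => g (Z ω))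

private lemma EC_H_of_isEmpty [IsEmpty Ω] [Fintype α] (p : Ω → ℝ) (X : Ω → α) :
    H p X = 0 := by
  unfold H pr
  simp

private lemma EC_blk_isPMF {S : Type*} [Fintype S] {p : S → ℝ} (hp : IsPMF p) (N : ℕ) :
    IsPMF (blk N p) := by
  constructor
  · intro ω; exact Finset.prod_nonneg fun i _ => hp.1 _
  · unfold blk
    rw [← Fintype.piFinset_univ, ← Finset.prod_univ_sum]
    simp [hp.2]

private lemma EC_telescope (N : ℕ) (f : ℕ → ℝ) :
    ∑ i : Fin N, (f (i.val + 1) - f i.val) = f N - f 0 := by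
  rw [Fin.sum_univ_eq_sum_range (fun n => f (n + 1) - f n) N]
  exact Finset.sum_range_sub f N

end EquivocationAux

set_option maxHeartbeats 1000000 in
/-- Equivocation converse single-letterization: for `(A_i, C_i, E_i)` i.i.d. `~ p`,
`J = f_A(A^N)`, `K = f_C(C^N)`, `U_i = (J, A^{i-1}, E^{i-1})` and `V_i = (K, C^{i-1})`, one
has `H(A^N | J, E^N) ≤ H(A^N | J, K) + Σ_i [ I(A_i;V_i|U_i) − I(A_i;E_i|U_i) ]`. -/
theorem equivocation_converse {𝒜 𝒞 ℰ κJ κK : Type}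
    [Fintype 𝒜] [Fintype 𝒞] [Fintype ℰ] [Fintype κJ] [Fintype κK]
    (p : 𝒜 × 𝒞 × ℰ → ℝ) (hp : IsPMF p) (N : ℕ)
    (fA : (Fin N → 𝒜) → κJ) (fC : (Fin N → 𝒞) → κK) :
    Hc (blk N p) (fun ω => (fun i => (ω i).1))
        (fun ω => (fA (fun i => (ω i).1), fun i => (ω i).2.2)) ≤
      Hc (blk N p) (fun ω => (fun i => (ω i).1))
          (fun ω => (fA (fun i => (ω i).1), fC (fun i => (ω i).2.1))) +
      ∑ i : Fin N,
        (cMI (blk N p) (fun ω => (ω i).1)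
            (fun ω => (fC (fun i' => (ω i').2.1),
              fun j : Fin i.val => (ω ⟨j.val, j.isLt.trans i.isLt⟩).2.1))
            (fun ω => (fA (fun i' => (ω i').1),
              (fun j : Fin i.val => (ω ⟨j.val, j.isLt.trans i.isLt⟩).1),
              fun j : Fin i.val => (ω ⟨j.val, j.isLt.trans i.isLt⟩).2.2)) -
         cMI (blk N p) (fun ω => (ω i).1)
            (fun ω => (ω i).2.2)
            (fun ω => (fA (fun i' => (ω i').1),
              (fun j : Fin i.val => (ω ⟨j.val, j.isLt.trans i.isLt⟩).1),
              fun j : Fin i.val => (ω ⟨j.val, j.isLt.trans i.isLt⟩).2.2))) := by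
  classical
  rcases isEmpty_or_nonempty (Fin N → 𝒜 × 𝒞 × ℰ) with hΩ | hΩ
  · simp [Hc, cMI, EC_H_of_isEmpty]
  · obtain ⟨ω0⟩ := hΩ
    simp only [cMI]
    have hQ : IsPMF (blk N p) := EC_blk_isPMF hp N
    -- boundary identities for the A-side telescope
    have hLa : H (blk N p) (fun ω => (((fun i' => (ω i').1) : Fin N → 𝒜), (fA (fun i' => (ω i').1), (fun i' => (ω i').2.2))))
        = H (blk N p) (fun ω => (fA (fun i' => (ω i').1), (fun j => if j.val < N then some ((ω j).1) else none), (fun i' => (ω i').2.2))) :=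
      EC_H_eq (blk N p) _ _
        (fun t => (t.2.1, fun j => some (t.1 j), t.2.2))
        (fun t => (fun j => (t.2.1 j).getD ((ω0 j).1), (t.1, t.2.2)))
        (fun ω => by
          refine congrArg₂ Prod.mk rfl (congrArg₂ Prod.mk ?_ rfl)
          funext j
          rw [if_pos j.isLt])
        (fun ω => by
          refine congrArg₂ Prod.mk ?_ rfl
          funext j
          simp)
    have hLb : H (blk N p) (fun ω => (fA (fun i' => (ω i').1), (fun i' => (ω i').2.2)))
        = H (blk N p) (fun ω => (fA (fun i' => (ω i').1), (fun j => if j.val < 0 then some ((ω j).1) else none), (fun i' => (ω i').2.2))) :=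
      EC_H_eq (blk N p) _ _
        (fun t => (t.1, fun _ => none, t.2))
        (fun t => (t.1, t.2.2))
        (fun ω => by
          refine congrArg₂ Prod.mk rfl (congrArg₂ Prod.mk ?_ rfl)
          funext j
          rw [if_neg (Nat.not_lt_zero _)])
        (fun ω => rfl)
    have hL : Hc (blk N p) (fun ω => ((fun i' => (ω i').1) : Fin N → 𝒜)) (fun ω => (fA (fun i' => (ω i').1), (fun i' => (ω i').2.2)))
        = H (blk N p) (fun ω => (fA (fun i' => (ω i').1), (fun j => if j.val < N then some ((ω j).1) else none), (fun i' => (ω i').2.2))) - H (blk N p) (fun ω => (fA (fun i' => (ω i').1), (fun j => if j.val < 0 then some ((ω j).1) else none), (fun i' => (ω i').2.2))) := by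
      rw [show Hc (blk N p) (fun ω => ((fun i' => (ω i').1) : Fin N → 𝒜)) (fun ω => (fA (fun i' => (ω i').1), (fun i' => (ω i').2.2)))
          = H (blk N p) (fun ω => (((fun i' => (ω i').1) : Fin N → 𝒜), (fA (fun i' => (ω i').1), (fun i' => (ω i').2.2)))) - H (blk N p) (fun ω => (fA (fun i' => (ω i').1), (fun i' => (ω i').2.2))) from rfl,
        hLa, hLb]
    -- boundary identities for the (J,K) telescope
    have hRa : H (blk N p) (fun ω => (((fun i' => (ω i').1) : Fin N → 𝒜), (fA (fun i' => (ω i').1), fC (fun i' => (ω i').2.1))))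
        = H (blk N p) (fun ω => (fA (fun i' => (ω i').1), fC (fun i' => (ω i').2.1), (fun j => if j.val < N then some ((ω j).1) else none))) :=
      EC_H_eq (blk N p) _ _
        (fun t => (t.2.1, t.2.2, fun j => some (t.1 j)))
        (fun t => (fun j => (t.2.2 j).getD ((ω0 j).1), (t.1, t.2.1)))
        (fun ω => by
          refine congrArg₂ Prod.mk rfl (congrArg₂ Prod.mk rfl ?_)
          funext j
          rw [if_pos j.isLt])
        (fun ω => by
          refine congrArg₂ Prod.mk ?_ rfl
          funext j
          simp)
    have hRb : H (blk N p) (fun ω => (fA (fun i' => (ω i').1), fC (fun i' => (ω i').2.1)))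
        = H (blk N p) (fun ω => (fA (fun i' => (ω i').1), fC (fun i' => (ω i').2.1), (fun j => if j.val < 0 then some ((ω j).1) else none))) :=
      EC_H_eq (blk N p) _ _
        (fun t => (t.1, t.2, fun _ => none))
        (fun t => (t.1, t.2.1))
        (fun ω => by
          refine congrArg₂ Prod.mk rfl (congrArg₂ Prod.mk rfl ?_)
          funext j
          rw [if_neg (Nat.not_lt_zero _)])
        (fun ω => rfl)
    have hR : Hc (blk N p) (fun ω => ((fun i' => (ω i').1) : Fin N → 𝒜)) (fun ω => (fA (fun i' => (ω i').1), fC (fun i' => (ω i').2.1)))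
        = H (blk N p) (fun ω => (fA (fun i' => (ω i').1), fC (fun i' => (ω i').2.1), (fun j => if j.val < N then some ((ω j).1) else none))) - H (blk N p) (fun ω => (fA (fun i' => (ω i').1), fC (fun i' => (ω i').2.1), (fun j => if j.val < 0 then some ((ω j).1) else none))) := by
      rw [show Hc (blk N p) (fun ω => ((fun i' => (ω i').1) : Fin N → 𝒜)) (fun ω => (fA (fun i' => (ω i').1), fC (fun i' => (ω i').2.1)))
          = H (blk N p) (fun ω => (((fun i' => (ω i').1) : Fin N → 𝒜), (fA (fun i' => (ω i').1), fC (fun i' => (ω i').2.1)))) - H (blk N p) (fun ω => (fA (fun i' => (ω i').1), fC (fun i' => (ω i').2.1))) from rfl,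
        hRa, hRb]
    -- telescopes
    have tel1 : ∑ i : Fin N,
        (H (blk N p) (fun ω => (fA (fun i' => (ω i').1), (fun j => if j.val < i.val + 1 then some ((ω j).1) else none), (fun i' => (ω i').2.2))) - H (blk N p) (fun ω => (fA (fun i' => (ω i').1), (fun j => if j.val < i.val then some ((ω j).1) else none), (fun i' => (ω i').2.2))))
        = H (blk N p) (fun ω => (fA (fun i' => (ω i').1), (fun j => if j.val < N then some ((ω j).1) else none), (fun i' => (ω i').2.2))) - H (blk N p) (fun ω => (fA (fun i' => (ω i').1), (fun j => if j.val < 0 then some ((ω j).1) else none), (fun i' => (ω i').2.2))) := by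
      have h := EC_telescope N (fun n => H (blk N p) (fun ω => (fA (fun i' => (ω i').1), (fun j => if j.val < n then some ((ω j).1) else none), (fun i' => (ω i').2.2))))
      exact h
    have tel2 : ∑ i : Fin N,
        (H (blk N p) (fun ω => (fA (fun i' => (ω i').1), fC (fun i' => (ω i').2.1), (fun j => if j.val < i.val + 1 then some ((ω j).1) else none))) - H (blk N p) (fun ω => (fA (fun i' => (ω i').1), fC (fun i' => (ω i').2.1), (fun j => if j.val < i.val then some ((ω j).1) else none))))
        = H (blk N p) (fun ω => (fA (fun i' => (ω i').1), fC (fun i' => (ω i').2.1), (fun j => if j.val < N then some ((ω j).1) else none))) - H (blk N p) (fun ω => (fA (fun i' => (ω i').1), fC (fun i' => (ω i').2.1), (fun j => if j.val < 0 then some ((ω j).1) else none))) := by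
      have h := EC_telescope N (fun n => H (blk N p) (fun ω => (fA (fun i' => (ω i').1), fC (fun i' => (ω i').2.1), (fun j => if j.val < n then some ((ω j).1) else none))))
      exact h
    -- chain-rule steps
    have stepS : ∀ i : Fin N,
        H (blk N p) (fun ω => (fA (fun i' => (ω i').1), (fun j => if j.val < i.val + 1 then some ((ω j).1) else none), (fun i' => (ω i').2.2)))
          = H (blk N p) (fun ω => ((ω i).1, (fA (fun i' => (ω i').1), (fun j => if j.val < i.val then some ((ω j).1) else none), (fun i' => (ω i').2.2)))) := by
      intro i
      refine EC_H_eq (blk N p) _ _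
        (fun t => ((t.2.1 i).getD ((ω0 i).1),
          (t.1, fun j => if j.val < i.val then t.2.1 j else none, t.2.2)))
        (fun t => (t.2.1, fun j => if j.val = i.val then some t.1 else t.2.2.1 j, t.2.2.2))
        (fun ω => ?_) (fun ω => ?_)
      · refine congrArg₂ Prod.mk ?_ (congrArg₂ Prod.mk rfl (congrArg₂ Prod.mk ?_ rfl))
        · dsimp only
          rw [if_pos (show (i : ℕ) < (i : ℕ) + 1 by omega)]
          rfl
        · funext j
          dsimp only
          by_cases hj : (j : ℕ) < (i : ℕ)
          · rw [if_pos hj, if_pos hj, if_pos (show (j : ℕ) < (i : ℕ) + 1 by omega)]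
          · rw [if_neg hj, if_neg hj]
      · refine congrArg₂ Prod.mk rfl (congrArg₂ Prod.mk ?_ rfl)
        funext j
        dsimp only
        by_cases hj : (j : ℕ) = (i : ℕ)
        · have hji : j = i := Fin.ext hj
          subst hji
          rw [if_pos (show (j : ℕ) < (j : ℕ) + 1 by omega), if_pos rfl]
        · rw [if_neg hj]
          by_cases hlt : (j : ℕ) < (i : ℕ)
          · rw [if_pos hlt, if_pos (show (j : ℕ) < (i : ℕ) + 1 by omega)]
          · rw [if_neg hlt, if_neg (show ¬((j : ℕ) < (i : ℕ) + 1) by omega)]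
    have stepT : ∀ i : Fin N,
        H (blk N p) (fun ω => (fA (fun i' => (ω i').1), fC (fun i' => (ω i').2.1), (fun j => if j.val < i.val + 1 then some ((ω j).1) else none)))
          = H (blk N p) (fun ω => ((ω i).1, (fA (fun i' => (ω i').1), fC (fun i' => (ω i').2.1), (fun j => if j.val < i.val then some ((ω j).1) else none)))) := by
      intro i
      refine EC_H_eq (blk N p) _ _
        (fun t => ((t.2.2 i).getD ((ω0 i).1),
          (t.1, t.2.1, fun j => if j.val < i.val then t.2.2 j else none)))
        (fun t => (t.2.1, t.2.2.1, fun j => if j.val = i.val then some t.1 else t.2.2.2 j))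
        (fun ω => ?_) (fun ω => ?_)
      · refine congrArg₂ Prod.mk ?_ (congrArg₂ Prod.mk rfl (congrArg₂ Prod.mk rfl ?_))
        · dsimp only
          rw [if_pos (show (i : ℕ) < (i : ℕ) + 1 by omega)]
          rfl
        · funext j
          dsimp only
          by_cases hj : (j : ℕ) < (i : ℕ)
          · rw [if_pos hj, if_pos hj, if_pos (show (j : ℕ) < (i : ℕ) + 1 by omega)]
          · rw [if_neg hj, if_neg hj]
      · refine congrArg₂ Prod.mk rfl (congrArg₂ Prod.mk rfl ?_)
        funext j
        dsimp only
        by_cases hj : (j : ℕ) = (i : ℕ)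
        · have hji : j = i := Fin.ext hj
          subst hji
          rw [if_pos (show (j : ℕ) < (j : ℕ) + 1 by omega), if_pos rfl]
        · rw [if_neg hj]
          by_cases hlt : (j : ℕ) < (i : ℕ)
          · rw [if_pos hlt, if_pos (show (j : ℕ) < (i : ℕ) + 1 by omega)]
          · rw [if_neg hlt, if_neg (show ¬((j : ℕ) < (i : ℕ) + 1) by omega)]
    -- conditioning can only be better on the E side
    have condS : ∀ i : Fin N,
        Hc (blk N p) (fun ω => (ω i).1) (fun ω => (fA (fun i' => (ω i').1), (fun j => if j.val < i.val then some ((ω j).1) else none), (fun i' => (ω i').2.2)))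
          ≤ Hc (blk N p) (fun ω => (ω i).1) (fun ω => ((ω i).2.2, (fA (fun i' => (ω i').1), (fun j : Fin i.val => (ω ⟨j.val, j.isLt.trans i.isLt⟩).1), (fun j : Fin i.val => (ω ⟨j.val, j.isLt.trans i.isLt⟩).2.2)))) := by
      intro i
      have h1 := EC_Hc_le_comp (blk N p) hQ (fun ω => (ω i).1)
        (fun ω => (fA (fun i' => (ω i').1), (fun j => if j.val < i.val then some ((ω j).1) else none), (fun i' => (ω i').2.2)))
        (fun t => (t.2.2 i, (t.1,
          fun j : Fin i.val => (t.2.1 ⟨j.val, j.isLt.trans i.isLt⟩).getD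
            ((ω0 ⟨j.val, j.isLt.trans i.isLt⟩).1),
          fun j : Fin i.val => t.2.2 ⟨j.val, j.isLt.trans i.isLt⟩)))
      refine le_trans h1 (le_of_eq ?_)
      congr 1
      funext ω
      dsimp only
      refine congrArg₂ Prod.mk rfl (congrArg₂ Prod.mk rfl (congrArg₂ Prod.mk ?_ rfl))
      funext j
      rw [if_pos j.isLt]
      rfl
    -- conditioning can only be worse on the V side
    have condV : ∀ i : Fin N,
        Hc (blk N p) (fun ω => (ω i).1) (fun ω => ((fC (fun i' => (ω i').2.1), (fun j : Fin i.val => (ω ⟨j.val, j.isLt.trans i.isLt⟩).2.1)), (fA (fun i' => (ω i').1), (fun j : Fin i.val => (ω ⟨j.val, j.isLt.trans i.isLt⟩).1), (fun j : Fin i.val => (ω ⟨j.val, j.isLt.trans i.isLt⟩).2.2))))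
          ≤ Hc (blk N p) (fun ω => (ω i).1) (fun ω => (fA (fun i' => (ω i').1), fC (fun i' => (ω i').2.1), (fun j => if j.val < i.val then some ((ω j).1) else none))) := by
      intro i
      have hcongr : Hc (blk N p) (fun ω => (ω i).1) (fun ω => ((fC (fun i' => (ω i').2.1), (fun j : Fin i.val => (ω ⟨j.val, j.isLt.trans i.isLt⟩).2.1)), (fA (fun i' => (ω i').1), (fun j : Fin i.val => (ω ⟨j.val, j.isLt.trans i.isLt⟩).1), (fun j : Fin i.val => (ω ⟨j.val, j.isLt.trans i.isLt⟩).2.2))))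
          = Hc (blk N p) (fun ω => (ω i).1) (fun ω => (((fun j => if j.val < i.val then some ((ω j).2.1) else none), (fun j => if j.val < i.val then some ((ω j).2.2) else none)), (fA (fun i' => (ω i').1), fC (fun i' => (ω i').2.1), (fun j => if j.val < i.val then some ((ω j).1) else none)))) := by
        refine EC_Hc_congr (blk N p) _ _ _ ?_ ?_ ?_ ?_
        · exact fun t => ((fun j => if hj : j.val < i.val then some (t.1.2 ⟨j.val, hj⟩) else none,
              fun j => if hj : j.val < i.val then some (t.2.2.2 ⟨j.val, hj⟩) else none),
            (t.2.1, t.1.1,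
              fun j => if hj : j.val < i.val then some (t.2.2.1 ⟨j.val, hj⟩) else none))
        · exact fun t => ((t.2.2.1,
              fun j : Fin i.val => (t.1.1 ⟨j.val, j.isLt.trans i.isLt⟩).getD
                ((ω0 ⟨j.val, j.isLt.trans i.isLt⟩).2.1)),
            (t.2.1,
              fun j : Fin i.val => (t.2.2.2 ⟨j.val, j.isLt.trans i.isLt⟩).getD
                ((ω0 ⟨j.val, j.isLt.trans i.isLt⟩).1),
              fun j : Fin i.val => (t.1.2 ⟨j.val, j.isLt.trans i.isLt⟩).getD
                ((ω0 ⟨j.val, j.isLt.trans i.isLt⟩).2.2)))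
        · intro ω
          refine congrArg₂ Prod.mk (congrArg₂ Prod.mk ?_ ?_)
              (congrArg₂ Prod.mk rfl (congrArg₂ Prod.mk rfl ?_)) <;>
          · funext j
            dsimp only
            by_cases hj : (j : ℕ) < (i : ℕ)
            · rw [if_pos hj, dif_pos hj]
            · rw [if_neg hj, dif_neg hj]
        · intro ω
          refine congrArg₂ Prod.mk (congrArg₂ Prod.mk rfl ?_)
              (congrArg₂ Prod.mk rfl (congrArg₂ Prod.mk ?_ ?_)) <;>
          · funext j
            dsimp only
            rw [if_pos j.isLt]
            rfl
      rw [hcongr]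
      have h2 := EC_Hc_pair_le (blk N p) hQ (fun ω => (ω i).1)
        (fun ω => ((fun j => if j.val < i.val then some ((ω j).2.1) else none), (fun j => if j.val < i.val then some ((ω j).2.2) else none))) (fun ω => (fA (fun i' => (ω i').1), fC (fun i' => (ω i').2.1), (fun j => if j.val < i.val then some ((ω j).1) else none)))
      exact h2
    -- assemble
    have main1 : Hc (blk N p) (fun ω => ((fun i' => (ω i').1) : Fin N → 𝒜)) (fun ω => (fA (fun i' => (ω i').1), (fun i' => (ω i').2.2)))
        ≤ ∑ i : Fin N, Hc (blk N p) (fun ω => (ω i).1) (fun ω => ((ω i).2.2, (fA (fun i' => (ω i').1), (fun j : Fin i.val => (ω ⟨j.val, j.isLt.trans i.isLt⟩).1), (fun j : Fin i.val => (ω ⟨j.val, j.isLt.trans i.isLt⟩).2.2)))) := by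
      rw [hL, ← tel1]
      refine Finset.sum_le_sum fun i _ => ?_
      calc H (blk N p) (fun ω => (fA (fun i' => (ω i').1), (fun j => if j.val < i.val + 1 then some ((ω j).1) else none), (fun i' => (ω i').2.2))) - H (blk N p) (fun ω => (fA (fun i' => (ω i').1), (fun j => if j.val < i.val then some ((ω j).1) else none), (fun i' => (ω i').2.2)))
          = Hc (blk N p) (fun ω => (ω i).1) (fun ω => (fA (fun i' => (ω i').1), (fun j => if j.val < i.val then some ((ω j).1) else none), (fun i' => (ω i').2.2))) := by
            rw [stepS i]
            rfl
        _ ≤ Hc (blk N p) (fun ω => (ω i).1) (fun ω => ((ω i).2.2, (fA (fun i' => (ω i').1), (fun j : Fin i.val => (ω ⟨j.val, j.isLt.trans i.isLt⟩).1), (fun j : Fin i.val => (ω ⟨j.val, j.isLt.trans i.isLt⟩).2.2)))) := condS i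
    have main2 : ∑ i : Fin N, Hc (blk N p) (fun ω => (ω i).1) (fun ω => ((fC (fun i' => (ω i').2.1), (fun j : Fin i.val => (ω ⟨j.val, j.isLt.trans i.isLt⟩).2.1)), (fA (fun i' => (ω i').1), (fun j : Fin i.val => (ω ⟨j.val, j.isLt.trans i.isLt⟩).1), (fun j : Fin i.val => (ω ⟨j.val, j.isLt.trans i.isLt⟩).2.2))))
        ≤ Hc (blk N p) (fun ω => ((fun i' => (ω i').1) : Fin N → 𝒜)) (fun ω => (fA (fun i' => (ω i').1), fC (fun i' => (ω i').2.1))) := by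
      rw [hR, ← tel2]
      refine Finset.sum_le_sum fun i _ => ?_
      calc Hc (blk N p) (fun ω => (ω i).1) (fun ω => ((fC (fun i' => (ω i').2.1), (fun j : Fin i.val => (ω ⟨j.val, j.isLt.trans i.isLt⟩).2.1)), (fA (fun i' => (ω i').1), (fun j : Fin i.val => (ω ⟨j.val, j.isLt.trans i.isLt⟩).1), (fun j : Fin i.val => (ω ⟨j.val, j.isLt.trans i.isLt⟩).2.2))))
          ≤ Hc (blk N p) (fun ω => (ω i).1) (fun ω => (fA (fun i' => (ω i').1), fC (fun i' => (ω i').2.1), (fun j => if j.val < i.val then some ((ω j).1) else none))) := condV i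
        _ = H (blk N p) (fun ω => (fA (fun i' => (ω i').1), fC (fun i' => (ω i').2.1), (fun j => if j.val < i.val + 1 then some ((ω j).1) else none))) - H (blk N p) (fun ω => (fA (fun i' => (ω i').1), fC (fun i' => (ω i').2.1), (fun j => if j.val < i.val then some ((ω j).1) else none))) := by
            rw [stepT i]
            rfl
    have hsum_eq : ∑ i : Fin N,
        ((Hc (blk N p) (fun ω => (ω i).1) (fun ω => (fA (fun i' => (ω i').1), (fun j : Fin i.val => (ω ⟨j.val, j.isLt.trans i.isLt⟩).1), (fun j : Fin i.val => (ω ⟨j.val, j.isLt.trans i.isLt⟩).2.2)))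
            - Hc (blk N p) (fun ω => (ω i).1) (fun ω => ((fC (fun i' => (ω i').2.1), (fun j : Fin i.val => (ω ⟨j.val, j.isLt.trans i.isLt⟩).2.1)), (fA (fun i' => (ω i').1), (fun j : Fin i.val => (ω ⟨j.val, j.isLt.trans i.isLt⟩).1), (fun j : Fin i.val => (ω ⟨j.val, j.isLt.trans i.isLt⟩).2.2)))))
          - (Hc (blk N p) (fun ω => (ω i).1) (fun ω => (fA (fun i' => (ω i').1), (fun j : Fin i.val => (ω ⟨j.val, j.isLt.trans i.isLt⟩).1), (fun j : Fin i.val => (ω ⟨j.val, j.isLt.trans i.isLt⟩).2.2)))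
            - Hc (blk N p) (fun ω => (ω i).1) (fun ω => ((ω i).2.2, (fA (fun i' => (ω i').1), (fun j : Fin i.val => (ω ⟨j.val, j.isLt.trans i.isLt⟩).1), (fun j : Fin i.val => (ω ⟨j.val, j.isLt.trans i.isLt⟩).2.2))))))
        = (∑ i : Fin N, Hc (blk N p) (fun ω => (ω i).1) (fun ω => ((ω i).2.2, (fA (fun i' => (ω i').1), (fun j : Fin i.val => (ω ⟨j.val, j.isLt.trans i.isLt⟩).1), (fun j : Fin i.val => (ω ⟨j.val, j.isLt.trans i.isLt⟩).2.2)))))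
          - ∑ i : Fin N, Hc (blk N p) (fun ω => (ω i).1) (fun ω => ((fC (fun i' => (ω i').2.1), (fun j : Fin i.val => (ω ⟨j.val, j.isLt.trans i.isLt⟩).2.1)), (fA (fun i' => (ω i').1), (fun j : Fin i.val => (ω ⟨j.val, j.isLt.trans i.isLt⟩).1), (fun j : Fin i.val => (ω ⟨j.val, j.isLt.trans i.isLt⟩).2.2)))) := by
      rw [← Finset.sum_sub_distrib]
      exact Finset.sum_congr rfl fun i _ => by ring
    rw [hsum_eq]
    linarith [main1, main2]
end
end

section
/- (Equivocation bound via Charlie's rate.) Let (A_i, C_i, E_i), i = 1,…,N, be i.i.d. finite-valued triples with pmf p_{ACE}, and let J = f_A(A^N) and K = f_C(C^N) be arbitrary functions of the blocks A^N and C^N respectively. Then H(A^N | J, E^N) + N·H(C|A) ≤ H(A^N, C^N | J, K) + H(K), where H(C|A) is the single-letter conditional entropy of C given A under p_{ACE}. -/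
open scoped BigOperators

noncomputable section

open SSW

/-! Write `A`, `C`, `E` for the blocks, `J = f_A(A)` and `K = f_C(C)`. Conditioning reduces
entropy and `J` is a function of `A`, so `H(A | J, E) ≤ H(A) - H(J)`; since `(J, K)` is a function
of `(A, C)`, subadditivity gives `H(A, C | J, K) = H(A, C) - H(J, K) ≥ H(A, C) - H(J) - H(K)`.
What is left is `H(A, C) - H(A)`, which for i.i.d. blocks is `N · H(C|A)` in single letters.
Both entropy inequalities are instances of strong subadditivity, which is Gibbs' inequality
against the law `p(x, y) p(y, z) / p(y)` of the Markov chain `X − Y − Z`. -/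

namespace SSW

open Real

section Entropy

variable {Ω α β γ : Type*} [Fintype Ω] (p : Ω → ℝ)

theorem sum_pr_mul [Fintype α] (X : Ω → α) (φ : α → ℝ) :
    ∑ a, pr p X a * φ a = ∑ ω, p ω * φ (X ω) := by
  simp only [pr, Finset.sum_mul]
  rw [Finset.sum_comm]
  refine Finset.sum_congr rfl fun ω _ => ?_
  rw [Finset.sum_eq_single (X ω) (fun a _ ha => by rw [if_neg (Ne.symm ha), zero_mul])
    (by simp), if_pos rfl]

theorem sum_pr [Fintype α] (X : Ω → α) : ∑ a, pr p X a = ∑ ω, p ω := by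
  simpa using sum_pr_mul p X 1

theorem sum_pr_pair_left [Fintype α] (U : Ω → α) (V : Ω → β) (b : β) :
    ∑ a, pr p (fun ω => (U ω, V ω)) (a, b) = pr p V b := by
  simp only [pr]
  rw [Finset.sum_comm]
  refine Finset.sum_congr rfl fun ω _ => ?_
  rw [Finset.sum_eq_single (U ω) (fun a _ ha => if_neg fun h => ha (congrArg Prod.fst h).symm)
    (by simp)]
  by_cases h : V ω = b <;> simp [h]

theorem sum_pr_pair_right [Fintype β] (U : Ω → α) (V : Ω → β) (a : α) :
    ∑ b, pr p (fun ω => (U ω, V ω)) (a, b) = pr p U a := by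
  simp only [pr]
  rw [Finset.sum_comm]
  refine Finset.sum_congr rfl fun ω _ => ?_
  rw [Finset.sum_eq_single (V ω) (fun b _ hb => if_neg fun h => hb (congrArg Prod.snd h).symm)
    (by simp)]
  by_cases h : U ω = a <;> simp [h]

theorem pr_comp_of_injective {g : α → β} (hg : g.Injective) (X : Ω → α) (a : α) :
    pr p (fun ω => g (X ω)) (g a) = pr p X a := by
  unfold pr
  congr! 2 with ω
  exact hg.eq_iff

theorem H_eq_sum_surprisal [Fintype α] (X : Ω → α) :
    H p X = ∑ ω, -(p ω * logb 2 (pr p X (X ω))) := by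
  simp only [H, ← mul_neg]
  exact sum_pr_mul p X fun a => -logb 2 (pr p X a)

theorem H_eq_sum_negMulLog [Fintype α] (X : Ω → α) :
    H p X = (∑ a, negMulLog (pr p X a)) / log 2 := by
  simp only [H, negMulLog, logb, Finset.sum_div]
  congr! 1 with a
  ring

theorem H_comp_of_injective [Fintype α] [Fintype β] {g : α → β} (hg : g.Injective)
    (X : Ω → α) : H p (fun ω => g (X ω)) = H p X := by
  simp only [H_eq_sum_surprisal, pr_comp_of_injective p hg]

theorem H_pair_swap [Fintype α] [Fintype β] (X : Ω → α) (Y : Ω → β) :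
    H p (fun ω => (Y ω, X ω)) = H p (fun ω => (X ω, Y ω)) :=
  H_comp_of_injective p Prod.swap_injective fun ω => (X ω, Y ω)

theorem Hc_comp_self [Fintype α] [Fintype β] (X : Ω → α) (g : α → β) :
    Hc p X (fun ω => g (X ω)) = H p X - H p (fun ω => g (X ω)) := by
  rw [Hc, H_comp_of_injective p (fun a b h => congrArg Prod.fst h : (fun a => (a, g a)).Injective)]

variable {p}

theorem pr_nonneg (hp : ∀ ω, 0 ≤ p ω) (X : Ω → α) (a : α) : 0 ≤ pr p X a :=
  Finset.sum_nonneg fun ω _ => by split_ifs; exacts [hp ω, le_rfl]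

theorem le_pr_apply (hp : ∀ ω, 0 ≤ p ω) (X : Ω → α) (ω : Ω) : p ω ≤ pr p X (X ω) :=
  (if_pos rfl).symm.trans_le <| Finset.single_le_sum
    (f := fun ω' => @ite _ (X ω' = X ω) (Classical.propDecidable _) (p ω') 0)
    (fun ω' _ => by split_ifs; exacts [hp ω', le_rfl]) (Finset.mem_univ ω)

theorem exists_pos_of_pr_pos (hp : ∀ ω, 0 ≤ p ω) {X : Ω → α} {a : α} (h : 0 < pr p X a) :
    ∃ ω, X ω = a ∧ 0 < p ω := by
  obtain ⟨ω, -, hω⟩ := Finset.exists_ne_zero_of_sum_ne_zero h.ne'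
  split_ifs at hω with hX
  · exact ⟨ω, hX, (hp ω).lt_of_ne' hω⟩
  · exact absurd rfl hω

theorem H_const_unit (hp : IsPMF p) : H p (fun _ => ()) = 0 := by
  have h1 : pr p (fun _ => ()) () = 1 := by simp [pr, hp.2]
  simp [H, h1]

theorem sum_mul_logb_le_sum_mul_logb {ι : Type*} [Fintype ι] {r q : ι → ℝ}
    (hr : ∀ i, 0 ≤ r i) (hq : ∀ i, 0 ≤ q i) (hsum : ∑ i, q i ≤ ∑ i, r i)
    (hsupp : ∀ i, 0 < r i → 0 < q i) :
    ∑ i, r i * logb 2 (q i) ≤ ∑ i, r i * logb 2 (r i) := by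
  have hterm : ∀ i, r i * logb 2 (q i) - r i * logb 2 (r i) ≤ (q i - r i) / log 2 := by
    intro i
    rcases (hr i).eq_or_lt with h | h
    · rw [← h]
      simpa using div_nonneg (hq i) (log_nonneg one_le_two)
    · have hlog := log_le_sub_one_of_pos (div_pos (hsupp i h) h)
      rw [log_div (hsupp i h).ne' h.ne'] at hlog
      calc r i * logb 2 (q i) - r i * logb 2 (r i)
          = r i * (log (q i) - log (r i)) / log 2 := by simp only [logb]; ring
        _ ≤ r i * (q i / r i - 1) / log 2 := by gcongr
        _ = (q i - r i) / log 2 := by field_simp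
  have hle := Finset.sum_le_sum fun i (_ : i ∈ Finset.univ) => hterm i
  rw [Finset.sum_sub_distrib, ← Finset.sum_div, Finset.sum_sub_distrib] at hle
  have : (∑ i, q i - ∑ i, r i) / log 2 ≤ 0 :=
    div_nonpos_of_nonpos_of_nonneg (by linarith) (log_nonneg one_le_two)
  linarith

theorem H_triple_add_H_le [Fintype α] [Fintype β] [Fintype γ] (hp : IsPMF p)
    (X : Ω → α) (Y : Ω → β) (Z : Ω → γ) :
    H p (fun ω => (X ω, Y ω, Z ω)) + H p Y ≤
      H p (fun ω => (X ω, Y ω)) + H p (fun ω => (Y ω, Z ω)) := by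
  set T : Ω → α × β × γ := fun ω => (X ω, Y ω, Z ω)
  -- The law of the Markov chain `X − Y − Z`; where `pr p Y y = 0`, `x / 0 = 0` makes it vanish.
  set q : α × β × γ → ℝ := fun t =>
    pr p (fun ω => (X ω, Y ω)) (t.1, t.2.1) * pr p (fun ω => (Y ω, Z ω)) t.2 / pr p Y t.2.1
  have hq_pos : ∀ ω, 0 < p ω → 0 < q (T ω) := fun ω hω =>
    div_pos (mul_pos (hω.trans_le (le_pr_apply hp.1 _ ω)) (hω.trans_le (le_pr_apply hp.1 _ ω)))
      (hω.trans_le (le_pr_apply hp.1 Y ω))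
  have hq_sum : ∑ t, q t = 1 := by
    calc ∑ t, q t = ∑ y, (∑ x, pr p (fun ω => (X ω, Y ω)) (x, y)) *
          (∑ z, pr p (fun ω => (Y ω, Z ω)) (y, z)) / pr p Y y := by
          simp only [q, Fintype.sum_prod_type, Finset.sum_mul_sum, Finset.sum_div]
          exact Finset.sum_comm
      _ = ∑ y, pr p Y y := by simp only [sum_pr_pair_left, sum_pr_pair_right, mul_self_div_self]
      _ = 1 := by rw [sum_pr, hp.2]
  have hgibbs := sum_mul_logb_le_sum_mul_logb (r := pr p T) (q := q) (pr_nonneg hp.1 T)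
    (fun t => div_nonneg (mul_nonneg (pr_nonneg hp.1 _ _) (pr_nonneg hp.1 _ _))
      (pr_nonneg hp.1 _ _))
    (by rw [hq_sum, sum_pr, hp.2])
    (fun t ht => by
      obtain ⟨ω, rfl, hω⟩ := exists_pos_of_pr_pos hp.1 ht
      exact hq_pos ω hω)
  rw [sum_pr_mul, sum_pr_mul] at hgibbs
  have hcross : ∑ ω, p ω * logb 2 (q (T ω)) =
      H p Y - H p (fun ω => (X ω, Y ω)) - H p (fun ω => (Y ω, Z ω)) := by
    rw [H_eq_sum_surprisal, H_eq_sum_surprisal, H_eq_sum_surprisal, ← Finset.sum_sub_distrib,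
      ← Finset.sum_sub_distrib]
    refine Finset.sum_congr rfl fun ω _ => ?_
    rcases (hp.1 ω).eq_or_lt with h | h
    · simp [← h]
    · have hXY := h.trans_le (le_pr_apply hp.1 (fun ω => (X ω, Y ω)) ω)
      have hYZ := h.trans_le (le_pr_apply hp.1 (fun ω => (Y ω, Z ω)) ω)
      have hY := h.trans_le (le_pr_apply hp.1 Y ω)
      simp only [q, T]
      rw [logb_div (mul_pos hXY hYZ).ne' hY.ne', logb_mul hXY.ne' hYZ.ne']
      ring
  have hentropy : ∑ ω, p ω * logb 2 (pr p T (T ω)) = -H p T := by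
    rw [H_eq_sum_surprisal, Finset.sum_neg_distrib, neg_neg]
  linarith

theorem H_pair_le_add [Fintype α] [Fintype β] (hp : IsPMF p) (X : Ω → α) (Y : Ω → β) :
    H p (fun ω => (X ω, Y ω)) ≤ H p X + H p Y := by
  have hXY : H p (fun ω => (X ω, (), Y ω)) = H p (fun ω => (X ω, Y ω)) :=
    H_comp_of_injective p (g := fun a : α × β => (a.1, (), a.2))
      (fun a b h => by simpa [Prod.ext_iff] using h) fun ω => (X ω, Y ω)
  have hX : H p (fun ω => (X ω, ())) = H p X :=
    H_comp_of_injective p (g := fun a : α => (a, ())) (fun a b h => congrArg Prod.fst h) X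
  have hY : H p (fun ω => ((), Y ω)) = H p Y :=
    H_comp_of_injective p (g := fun b : β => ((), b)) (fun a b h => congrArg Prod.snd h) Y
  have h := H_triple_add_H_le hp X (fun _ => ()) Y
  rwa [H_const_unit hp, add_zero, hXY, hX, hY] at h

theorem Hc_pair_le_Hc [Fintype α] [Fintype β] [Fintype γ] (hp : IsPMF p)
    (X : Ω → α) (Y : Ω → β) (Z : Ω → γ) :
    Hc p X (fun ω => (Y ω, Z ω)) ≤ Hc p X Y := by
  have := H_triple_add_H_le hp X Y Z
  rw [Hc, Hc]
  linarith

theorem Hc_comp_pair_add_Hc_le {ε κ κ' : Type*} [Fintype α] [Fintype γ] [Fintype ε]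
    [Fintype κ] [Fintype κ'] (hp : IsPMF p) (A : Ω → α) (C : Ω → γ) (E : Ω → ε)
    (fA : α → κ) (fC : γ → κ') :
    Hc p A (fun ω => (fA (A ω), E ω)) + Hc p C A ≤
      Hc p (fun ω => (A ω, C ω)) (fun ω => (fA (A ω), fC (C ω))) +
        H p (fun ω => fC (C ω)) := by
  have hcond : Hc p A (fun ω => (fA (A ω), E ω)) ≤ Hc p A (fun ω => fA (A ω)) :=
    Hc_pair_le_Hc hp A _ E
  have hJ : Hc p A (fun ω => fA (A ω)) = H p A - H p (fun ω => fA (A ω)) :=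
    Hc_comp_self p A fA
  have hJK : Hc p (fun ω => (A ω, C ω)) (fun ω => (fA (A ω), fC (C ω))) =
      H p (fun ω => (A ω, C ω)) - H p (fun ω => (fA (A ω), fC (C ω))) :=
    Hc_comp_self p (fun ω => (A ω, C ω)) fun ac => (fA ac.1, fC ac.2)
  have hCA : Hc p C A = H p (fun ω => (A ω, C ω)) - H p A := by rw [Hc, H_pair_swap]
  have hsub := H_pair_le_add hp (fun ω => fA (A ω)) (fun ω => fC (C ω))
  linarith

end Entropy

section Blocks

variable {S T U : Type*} [Fintype S] [Fintype T] [Fintype U]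

theorem sum_blk (N : ℕ) (p : S → ℝ) : ∑ ω, blk N p ω = (∑ s, p s) ^ N :=
  (Fintype.sum_pow p N).symm

theorem isPMF_blk {p : S → ℝ} (hp : IsPMF p) (N : ℕ) : IsPMF (blk N p) :=
  ⟨fun ω => Finset.prod_nonneg fun i _ => hp.1 _, by rw [sum_blk, hp.2, one_pow]⟩

theorem pr_blk (N : ℕ) (p : S → ℝ) (g : S → T) :
    pr (blk N p) (fun ω i => g (ω i)) = blk N (pr p g) := by
  classical
  ext v
  simp only [pr, blk]
  rw [Fintype.prod_sum]
  refine Finset.sum_congr rfl fun ω _ => ?_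
  by_cases h : ∀ i, g (ω i) = v i
  · rw [if_pos (funext h)]
    exact (Finset.prod_congr rfl fun i _ => if_pos (h i)).symm
  · obtain ⟨i, hi⟩ := not_forall.1 h
    rw [if_neg fun hv => hi (congrFun hv i)]
    exact (Finset.prod_eq_zero (Finset.mem_univ i) (if_neg hi)).symm

theorem sum_negMulLog_blk {q : T → ℝ} (hq : ∑ t, q t = 1) (N : ℕ) :
    ∑ v, negMulLog (blk N q v) = N * ∑ t, negMulLog (q t) := by
  induction N with
  | zero => simp [blk]
  | succ n ih =>
    have hblk : ∑ w, blk n q w = 1 := by rw [sum_blk, hq, one_pow]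
    rw [← (Fin.consEquiv fun _ => T).sum_comp, Fintype.sum_prod_type]
    simp only [blk, Fin.consEquiv_apply, Fin.prod_univ_succ, Fin.cons_zero, Fin.cons_succ,
      negMulLog_mul, Finset.sum_add_distrib, ← Finset.sum_mul, ← Finset.mul_sum] at ih hblk ⊢
    rw [hblk, hq, ih]
    push_cast
    ring

theorem H_blk {p : S → ℝ} (hp : IsPMF p) (N : ℕ) (g : S → T) :
    H (blk N p) (fun ω i => g (ω i)) = N * H p g := by
  rw [H_eq_sum_negMulLog, H_eq_sum_negMulLog, pr_blk, sum_negMulLog_blk (by rw [sum_pr, hp.2]),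
    mul_div_assoc]

theorem Hc_blk {p : S → ℝ} (hp : IsPMF p) (N : ℕ) (f : S → T) (g : S → U) :
    Hc (blk N p) (fun ω i => f (ω i)) (fun ω i => g (ω i)) = N * Hc p f g := by
  have hunzip := H_comp_of_injective (blk N p)
    (Equiv.arrowProdEquivProdArrow (Fin N) (fun _ => T) fun _ => U).injective
    fun ω i => (f (ω i), g (ω i))
  simp only [Equiv.arrowProdEquivProdArrow_apply] at hunzip
  rw [Hc, Hc, hunzip, mul_sub, ← H_blk hp N g, ← H_blk hp N fun s => (f s, g s)]

end Blocks

end SSW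

/-- Equivocation bound via Charlie's rate: for `(A_i, C_i, E_i)` i.i.d. `~ p`,
`J = f_A(A^N)` and `K = f_C(C^N)`, one has
`H(A^N | J, E^N) + N·H(C|A) ≤ H(A^N, C^N | J, K) + H(K)`. -/
theorem equivocation_bound_charlie_rate {𝒜 𝒞 ℰ κJ κK : Type}
    [Fintype 𝒜] [Fintype 𝒞] [Fintype ℰ] [Fintype κJ] [Fintype κK]
    (p : 𝒜 × 𝒞 × ℰ → ℝ) (hp : IsPMF p) (N : ℕ)
    (fA : (Fin N → 𝒜) → κJ) (fC : (Fin N → 𝒞) → κK) :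
    Hc (blk N p) (fun ω => (fun i => (ω i).1))
        (fun ω => (fA (fun i => (ω i).1), fun i => (ω i).2.2)) +
      N * Hc p (fun x => x.2.1) (fun x => x.1) ≤
    Hc (blk N p) (fun ω => ((fun i => (ω i).1), (fun i => (ω i).2.1)))
        (fun ω => (fA (fun i => (ω i).1), fC (fun i => (ω i).2.1))) +
      H (blk N p) (fun ω => fC (fun i => (ω i).2.1)) := by
  rw [← Hc_blk hp N]
  exact Hc_comp_pair_add_Hc_le (isPMF_blk hp N) (fun ω i => (ω i).1) (fun ω i => (ω i).2.1)
    (fun ω i => (ω i).2.2) fA fC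
end
end
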